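/- arXiv:math/0503197 — 8 statements merged into one kernel-verified Lean document; each statement's English description precedes it below -/
import Mathlib

section
/- Let E, F, G be Banach spaces, S : E → F a bounded linear operator, and T : E → G a surjective bounded linear operator such that the operator E → F × G, x ↦ (Sx, Tx) is Fredholm. Then T has a bounded linear right inverse. -/
/-!
A Fredholm operator between Banach spaces has a bounded quasi-inverse: here a bounded `v` with
`(S, T) ∘ v = id` up to a finite-rank operator. Projecting onto `G`, `R₀ = v (0, ·)` satisfies
`T ∘ R₀ = id + D` with `D` of finite rank. Correcting `R₀` by `L ∘ D`, where `L` is a linear right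
inverse of `T` restricted to the finite-dimensional range of `D` (hence automatically bounded),
gives a bounded right inverse of `T`.
-/

open Function Topology

theorem LinearMap.IsRightQuasiInverse.comp_inr {K V V₁ V₂ : Type*} [CommRing K]
    [AddCommGroup V] [Module K V] [AddCommGroup V₁] [Module K V₁] [AddCommGroup V₂] [Module K V₂]
    {S : V →ₗ[K] V₁} {T : V →ₗ[K] V₂} {v : V₁ × V₂ →ₗ[K] V}
    (hv : v.IsRightQuasiInverse (S.prod T)) :
    (v ∘ₗ LinearMap.inr K V₁ V₂).IsRightQuasiInverse T := by
  have hinr : (LinearMap.inr K V₁ V₂).IsRightQuasiInverse (LinearMap.snd K V₁ V₂) :=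
    Setoid.refl' _ _
  simpa using hv.comp hinr

namespace ContinuousLinearMap

theorem isStrictMap_of_isClosed_range {𝕜 E F : Type*} [NontriviallyNormedField 𝕜]
    [NormedAddCommGroup E] [NormedSpace 𝕜 E] [CompleteSpace E]
    [NormedAddCommGroup F] [NormedSpace 𝕜 F] [CompleteSpace F]
    {u : E →L[𝕜] F} (hu : IsClosed (Set.range u)) : IsStrictMap u := by
  have : CompleteSpace (u : E →ₗ[𝕜] F).range := hu.completeSpace_coe
  have hsurj : Surjective u.rangeRestrict := (u : E →ₗ[𝕜] F).surjective_rangeRestrict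
  exact (LinearMap.isStrictMap_iff_isOpenQuotientMap_rangeRestrict (f := (u : E →ₗ[𝕜] F))).mpr
    ⟨hsurj, u.rangeRestrict.continuous, u.rangeRestrict.isOpenMap hsurj⟩

theorem IsFredholm.of_isClosed_range {𝕜 E F : Type*} [RCLike 𝕜]
    [NormedAddCommGroup E] [NormedSpace 𝕜 E] [CompleteSpace E]
    [NormedAddCommGroup F] [NormedSpace 𝕜 F] [CompleteSpace F]
    {u : E →L[𝕜] F} (hker : FiniteDimensional 𝕜 (LinearMap.ker (u : E →ₗ[𝕜] F)))
    (hclosed : IsClosed (Set.range u))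
    (hcoker : FiniteDimensional 𝕜 (F ⧸ LinearMap.range (u : E →ₗ[𝕜] F))) :
    u.IsFredholm where
  isStrictMap := isStrictMap_of_isClosed_range hclosed
  isClosed_range := by rwa [LinearMap.coe_range]
  finite_ker := hker
  finite_coker := hcoker
  closedComplemented_ker := .of_finiteDimensional _

theorem HasRightInverse.of_isRightQuasiInverse {𝕜 E G : Type*} [NontriviallyNormedField 𝕜]
    [CompleteSpace 𝕜]
    [AddCommGroup E] [Module 𝕜 E] [TopologicalSpace E] [IsTopologicalAddGroup E]
    [ContinuousSMul 𝕜 E]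
    [AddCommGroup G] [Module 𝕜 G] [TopologicalSpace G] [IsTopologicalAddGroup G]
    [ContinuousSMul 𝕜 G] [T2Space G]
    {T : E →L[𝕜] G} {R₀ : G →L[𝕜] E} (hT : Surjective T)
    (hR₀ : (R₀ : G →ₗ[𝕜] E).IsRightQuasiInverse T) : T.HasRightInverse := by
  set D : G →L[𝕜] G := T ∘L R₀ - .id 𝕜 G
  have : FiniteDimensional 𝕜 (D : G →ₗ[𝕜] G).range :=
    Module.Finite.iff_fg.mpr (LinearMap.FiniteRangeSetoid.equiv_iff_hasFiniteRange.mp hR₀)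
  obtain ⟨L, hL⟩ := (T : E →ₗ[𝕜] G).exists_rightInverse_of_surjective
    (LinearMap.range_eq_top.mpr hT)
  let C := LinearMap.toContinuousLinearMap (L ∘ₗ (D : G →ₗ[𝕜] G).range.subtype)
  refine ⟨R₀ - C ∘L D.rangeRestrict, fun g => ?_⟩
  have hTL : T (L (D g)) = D g := LinearMap.congr_fun hL (D g)
  change T (R₀ g - L (D g)) = g
  rw [map_sub, hTL]
  simp [D]

end ContinuousLinearMap

/-- Lemma (efg): if `S : E → F` is bounded, `T : E → G` is bounded and surjective, and
`x ↦ (Sx, Tx)` is Fredholm (finite-dimensional kernel, closed range of finite codimension),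
then `T` has a bounded right inverse. -/
theorem stmt0 {E F G : Type*}
    [NormedAddCommGroup E] [NormedSpace ℝ E] [CompleteSpace E]
    [NormedAddCommGroup F] [NormedSpace ℝ F] [CompleteSpace F]
    [NormedAddCommGroup G] [NormedSpace ℝ G] [CompleteSpace G]
    (S : E →L[ℝ] F) (T : E →L[ℝ] G)
    (hT : Function.Surjective T)
    (hker : FiniteDimensional ℝ (LinearMap.ker ((S.prod T) : E →ₗ[ℝ] F × G)))
    (hclosed : IsClosed (Set.range (S.prod T)))
    (hcoker : FiniteDimensional ℝ
      ((F × G) ⧸ LinearMap.range ((S.prod T) : E →ₗ[ℝ] F × G))) :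
    ∃ R : G →L[ℝ] E, T.comp R = ContinuousLinearMap.id ℝ G := by
  obtain ⟨v, hv⟩ :=
    (ContinuousLinearMap.IsFredholm.of_isClosed_range hker hclosed hcoker).exists_isQuasiInverse
  obtain ⟨R, hR⟩ := ContinuousLinearMap.HasRightInverse.of_isRightQuasiInverse
    (R₀ := v ∘L ContinuousLinearMap.inr ℝ F G) hT hv.2.comp_inr
  exact ⟨R, ContinuousLinearMap.ext hR⟩
end

section
/- Let a topological group G act continuously on topological spaces Z and Z̃, and let π : Z̃ → Z be a G-equivariant covering map. Suppose every point of Z has arbitrarily small open neighborhoods U such that for every z ∈ U the set {g ∈ G : g·z ∈ U} is connected. Then the induced map π̃ : Z̃/G → Z/G is a covering map. -/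
/-!
Around any point of `Z` choose an open `U` with `π⁻¹ U ≅ U × I` over `U`, `I` discrete, and
with `{g | g • z ∈ U}` connected for `z ∈ U`. For `e` over `U`, the sheet index of `h • e` is a
continuous function of `h` on the connected set `{h | h • π e ∈ U}` with values in a discrete
space, hence constant: translating within `U` preserves sheets. So two points of `π⁻¹ U` lie in
one `G`-orbit iff their images in `U` do and they lie on the same sheet. Both
`π⁻¹ U → π̃⁻¹ (U/G)` and `π⁻¹ U ≅ U × I → U/G × I` are open quotient maps with the same fibres,
so `π̃⁻¹ (U/G) ≅ U/G × I` over `U/G`.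
-/

open Set Topology MulAction Function

theorem Topology.IsQuotientMap.exists_homeomorph_of_apply_eq_iff
    {X Y Z : Type*} [TopologicalSpace X] [TopologicalSpace Y] [TopologicalSpace Z]
    {f : X → Y} {g : X → Z} (hf : IsQuotientMap f) (hg : IsQuotientMap g)
    (h : ∀ a b, f a = f b ↔ g a = g b) : ∃ H : Y ≃ₜ Z, ∀ x, H (f x) = g x := by
  have hgf : ∀ x, g (surjInv hf.surjective (f x)) = g x := fun x =>
    (h _ _).1 (surjInv_eq hf.surjective (f x))
  have hfg : ∀ x, f (surjInv hg.surjective (g x)) = f x := fun x =>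
    (h _ _).2 (surjInv_eq hg.surjective (g x))
  refine ⟨{
    toFun y := g (surjInv hf.surjective y)
    invFun z := f (surjInv hg.surjective z)
    left_inv := hf.surjective.forall.2 fun x => by simp only [hgf, hfg]
    right_inv := hg.surjective.forall.2 fun x => by simp only [hgf, hfg]
    continuous_toFun := hf.continuous_iff.2 <| by simpa only [comp_def, hgf] using hg.continuous
    continuous_invFun := hg.continuous_iff.2 <| by simpa only [comp_def, hfg] using hf.continuous
    }, hgf⟩

theorem IsOpenMap.isOpenQuotientMap_mapsToRestrict {X Y : Type*} [TopologicalSpace X]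
    [TopologicalSpace Y] {f : X → Y} (hfo : IsOpenMap f) (hfc : Continuous f) {s : Set X}
    {t : Set Y} (hs : IsOpen s) (h : MapsTo f s t) (hts : t ⊆ f '' s) :
    IsOpenQuotientMap (h.restrict f s t) := by
  refine ⟨fun y => ?_, hfc.restrict h, ?_⟩
  · obtain ⟨x, hx, hxy⟩ := hts y.2
    exact ⟨⟨x, hx⟩, Subtype.ext hxy⟩
  · rw [h.restrict_eq_codRestrict]
    exact (hfo.comp hs.isOpenMap_subtype_val).codRestrict _

theorem exists_preimage_homeomorph_prod_of_subset {E X I : Type*} [TopologicalSpace E]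
    [TopologicalSpace X] [TopologicalSpace I] {f : E → X} {U V : Set X}
    (H : f ⁻¹' U ≃ₜ U × I) (hH : ∀ e, (H e).1.1 = f e) (hVU : V ⊆ U) :
    ∃ H' : f ⁻¹' V ≃ₜ V × I, ∀ e, (H' e).1.1 = f e := by
  have hHV : ∀ e : f ⁻¹' V, (H (inclusion (preimage_mono hVU) e)).1.1 ∈ V := fun e => by
    rw [hH]; exact e.2
  refine ⟨{
    toFun e := (⟨_, hHV e⟩, (H (inclusion (preimage_mono hVU) e)).2)
    invFun p := ⟨H.symm (inclusion hVU p.1, p.2), by simp [← hH]⟩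
    left_inv e := by
      apply Subtype.ext
      simp [inclusion]
    right_inv p := by
      ext
      · simp
      · simp
    continuous_toFun := by fun_prop
    continuous_invFun := by fun_prop }, fun e => by simp [hH]⟩

section

variable {G E X : Type*} [Group G] [MulAction G E] [MulAction G X]

theorem MulAction.orbitRel.Quotient.mk_eq_mk_iff {a b : E} :
    (Quotient.mk _ a : orbitRel.Quotient G E) = Quotient.mk _ b ↔ ∃ g : G, g • b = a :=
  Quotient.eq.trans (orbitRel_apply.trans mem_orbit_iff)

def orbitQuotientMap (f : E → X) (hf : ∀ (g : G) (e : E), f (g • e) = g • f e) :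
    orbitRel.Quotient G E → orbitRel.Quotient G X :=
  Quotient.map' f fun _ _ ⟨g, hg⟩ => ⟨g, by rw [← hg, hf]⟩

variable {f : E → X} (hf : ∀ (g : G) (e : E), f (g • e) = g • f e)

theorem orbitQuotientMap_mk (e : E) :
    orbitQuotientMap f hf (Quotient.mk _ e) = Quotient.mk _ (f e) := rfl

theorem orbitQuotientMap_preimage_image_mk (U : Set X) :
    orbitQuotientMap f hf ⁻¹' (Quotient.mk _ '' U) = Quotient.mk _ '' (f ⁻¹' U) := by
  ext y
  induction y using Quotient.inductionOn with | h e => ?_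
  simp only [mem_preimage, mem_image, orbitQuotientMap_mk, orbitRel.Quotient.mk_eq_mk_iff]
  constructor
  · rintro ⟨_, hu, g, rfl⟩
    exact ⟨g • e, by rwa [hf], g, rfl⟩
  · rintro ⟨_, he, g, rfl⟩
    exact ⟨_, by rwa [hf] at he, g, rfl⟩

variable [TopologicalSpace G] [TopologicalSpace E] [TopologicalSpace X] {U : Set X}
  {I : Type*} [TopologicalSpace I] (H : f ⁻¹' U ≃ₜ U × I) (hH : ∀ e, (H e).1.1 = f e)

include hf in
theorem snd_homeomorph_smul_eq [ContinuousSMul G E] [DiscreteTopology I] (e : f ⁻¹' U) {g : G}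
    (hconn : IsPreconnected {g : G | g • f e ∈ U}) (hg : g • f e ∈ U) :
    (H ⟨g • e, by rwa [mem_preimage, hf]⟩).2 = (H e).2 := by
  have : PreconnectedSpace {g : G | g • f e ∈ U} := isPreconnected_iff_preconnectedSpace.1 hconn
  have hcont : Continuous fun h : {g : G | g • f e ∈ U} =>
      (H ⟨h.1 • e, by rw [mem_preimage, hf]; exact h.2⟩).2 := by fun_prop
  refine (PreconnectedSpace.constant this hcont (x := ⟨g, hg⟩) (y := ⟨1, ?_⟩)).trans ?_
  · show (1 : G) • f e ∈ U
    rw [one_smul]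
    exact e.2
  · simp only [one_smul]

include hf hH in
theorem orbitRel_mk_eq_mk_iff_of_homeomorph [ContinuousSMul G E] [DiscreteTopology I]
    (hconn : ∀ z ∈ U, IsPreconnected {g : G | g • z ∈ U}) (e e' : f ⁻¹' U) :
    (Quotient.mk _ (e : E) : orbitRel.Quotient G E) = Quotient.mk _ (e' : E) ↔
      (Quotient.mk _ (f e) : orbitRel.Quotient G X) = Quotient.mk _ (f e') ∧
        (H e).2 = (H e').2 := by
  simp only [orbitRel.Quotient.mk_eq_mk_iff]
  constructor
  · rintro ⟨g, hg⟩
    have hge' : g • f e' ∈ U := by rw [← hf, hg]; exact e.2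
    refine ⟨⟨g, by rw [← hf, hg]⟩, ?_⟩
    rw [← snd_homeomorph_smul_eq hf H e' (hconn _ e'.2) hge']
    congr
    exact Subtype.ext hg.symm
  · rintro ⟨⟨g, hg⟩, hsnd⟩
    have hge' : g • f e' ∈ U := hg ▸ e.2
    have : (⟨g • e', by rwa [mem_preimage, hf]⟩ : f ⁻¹' U) = e :=
      H.injective (Prod.ext (Subtype.ext (by rw [hH, hH, hf, hg]))
        ((snd_homeomorph_smul_eq hf H e' (hconn _ e'.2) hge').trans hsnd.symm))
    exact ⟨g, congrArg Subtype.val this⟩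

include hf hH in
theorem isEvenlyCovered_orbitQuotientMap [ContinuousSMul G E] [ContinuousConstSMul G X]
    [DiscreteTopology I] (hU : IsOpen U) (hfU : IsOpen (f ⁻¹' U))
    (hconn : ∀ z ∈ U, IsPreconnected {g : G | g • z ∈ U}) {z : X} (hz : z ∈ U) :
    IsEvenlyCovered (orbitQuotientMap f hf) (Quotient.mk _ z) I := by
  have hpre := orbitQuotientMap_preimage_image_mk hf U
  have hqE := isOpenQuotientMap_quotientMk (Γ := G) (T := E)
  have hqX := isOpenQuotientMap_quotientMk (Γ := G) (T := X)
  have hα := hqE.isOpenMap.isOpenQuotientMap_mapsToRestrict hqE.continuous hfU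
    (hpre ▸ mapsTo_image _ _) hpre.le
  have hβ := ((hqX.isOpenMap.isOpenQuotientMap_mapsToRestrict hqX.continuous hU
    (mapsTo_image _ U) subset_rfl).prodMap .id).comp H.isOpenQuotientMap
  obtain ⟨Φ, hΦ⟩ := hα.isQuotientMap.exists_homeomorph_of_apply_eq_iff hβ.isQuotientMap
    fun e e' => by
      simp only [Subtype.ext_iff, MapsTo.val_restrict_apply, comp_apply, Prod.ext_iff,
        Prod.map_fst, Prod.map_snd, id_eq, hH, orbitRel_mk_eq_mk_iff_of_homeomorph hf H hH hconn]
  refine ⟨‹_›, _, mem_image_of_mem _ hz, hqX.isOpenMap U hU, hpre ▸ hqE.isOpenMap _ hfU, Φ,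
    hα.surjective.forall.2 fun e => ?_⟩
  rw [hΦ]
  exact congrArg (Quotient.mk _) (hH e)

end

/-- If a topological group `G` acts continuously on `Z` and `Z̃`, `π : Z̃ → Z` is a
`G`-equivariant covering map, and every point of `Z` has arbitrarily small open
neighbourhoods `U` such that for every `z ∈ U` the set `{g : G | g • z ∈ U}` is connected,
then the induced map `Z̃/G → Z/G` is a covering map. -/
theorem stmt3 {G Z Z' : Type*} [Group G] [TopologicalSpace G]
    [TopologicalSpace Z] [TopologicalSpace Z']
    [MulAction G Z] [MulAction G Z'] [ContinuousSMul G Z] [ContinuousSMul G Z']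
    (π : Z' → Z) (hcov : IsCoveringMap π)
    (hequiv : ∀ (g : G) (z : Z'), π (g • z) = g • π z)
    (hU : ∀ z₀ : Z, ∀ V ∈ nhds z₀, ∃ U : Set Z, U ⊆ V ∧ IsOpen U ∧ z₀ ∈ U ∧
      ∀ z ∈ U, IsConnected {g : G | g • z ∈ U}) :
    IsCoveringMap
      (Quotient.map' π
        (fun a b hab => by
          obtain ⟨g, hg⟩ := hab
          exact ⟨g, by rw [← hg, hequiv]⟩) :
        Quotient (MulAction.orbitRel G Z') → Quotient (MulAction.orbitRel G Z)) := by
  refine Quotient.mk_surjective.forall.2 fun z => ?_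
  obtain ⟨_, U₀, hzU₀, hU₀, -, H₀, hH₀⟩ := hcov z
  obtain ⟨U, hUU₀, hU, hzU, hconn⟩ := hU z U₀ (hU₀.mem_nhds hzU₀)
  obtain ⟨H, hH⟩ := exists_preimage_homeomorph_prod_of_subset H₀ hH₀ hUU₀
  exact (isEvenlyCovered_orbitQuotientMap hequiv H hH hU (hU.preimage hcov.continuous)
    (fun z hz => (hconn z hz).isPreconnected) hzU).to_isEvenlyCovered_preimage
end

section
/- In the setting of the previous statement, pull-back along the quotient map Z → Z/G defines a bijection between continuous sections of π̃ : Z̃/G → Z/G and G-equivariant continuous sections of π : Z̃ → Z. If moreover G is connected, then every continuous section of π is automatically G-equivariant. -/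
/-!
Let `ℓ` be a continuous local section of `π` over an open set `U` with connected return sets
`{g | g • z ∈ U}`. Then `ℓ (g • z) = g • ℓ z` whenever `z, g • z ∈ U`: as functions of `g`, both
sides lift `g ↦ g • z` and agree at `1`, so they agree on the whole connected return set. Hence a
point of `Z̃` is determined by its image in `Z` and its orbit, so a section of `Z̃/G → Z/G` lifts
to a unique equivariant section of `π`, which agrees near each point with the sheet through it.
For connected `G` the same uniqueness of lifts, applied to `g ↦ s (g • z)` and `g ↦ g • s z` on
all of `G`, gives equivariance.
-/

open MulAction Set

section Sheets

variable {G Z Z' : Type*} [TopologicalSpace G] [TopologicalSpace Z] [TopologicalSpace Z']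
  {π : Z' → Z}

theorem IsCoveringMap.apply_smul_eq_smul_apply [Monoid G] [MulAction G Z] [MulAction G Z']
    [ContinuousSMul G Z] [ContinuousSMul G Z'] (hπ : IsCoveringMap π)
    (hπG : ∀ (g : G) (x : Z'), π (g • x) = g • π x) {U : Set Z} {ℓ : Z → Z'}
    (hℓ : ContinuousOn ℓ U) (hπℓ : ∀ z ∈ U, π (ℓ z) = z) {y : Z} (hy : y ∈ U)
    (hconn : IsPreconnected {g : G | g • y ∈ U}) {g : G} (hg : g • y ∈ U) :
    ℓ (g • y) = g • ℓ y := by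
  have hcont : Continuous fun h : G => h • y := by fun_prop
  refine hπ.eqOn_of_comp_eqOn (g₁ := fun h : G => ℓ (h • y)) (g₂ := fun h => h • ℓ y) hconn
    (hℓ.comp hcont.continuousOn fun _ hh => hh) (by fun_prop) (fun h hh => ?_)
    (a := 1) (by simpa using hy) (by simp) hg
  simp only [Function.comp_apply, hπG, hπℓ _ hh, hπℓ y hy]

theorem IsCoveringMap.eq_apply_of_mem_orbit [Monoid G] [MulAction G Z] [MulAction G Z']
    [ContinuousSMul G Z] [ContinuousSMul G Z'] (hπ : IsCoveringMap π)
    (hπG : ∀ (g : G) (x : Z'), π (g • x) = g • π x) {U : Set Z} {ℓ : Z → Z'}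
    (hℓ : ContinuousOn ℓ U) (hπℓ : ∀ z ∈ U, π (ℓ z) = z)
    (hconn : ∀ z ∈ U, IsPreconnected {g : G | g • z ∈ U}) {x w : Z'} (hx : x ∈ ℓ '' U)
    (hw : π w ∈ U) (hxw : w ∈ orbit G x) : w = ℓ (π w) := by
  obtain ⟨y, hy, rfl⟩ := hx
  obtain ⟨g, rfl⟩ := hxw
  rw [hπG, hπℓ y hy] at hw ⊢
  exact (hπ.apply_smul_eq_smul_apply hπG hℓ hπℓ hy (hconn y hy) hw).symm

theorem IsLocalHomeomorph.exists_sheet [SMul G Z] (hπ : IsLocalHomeomorph π)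
    (hU : ∀ z₀ : Z, ∀ V ∈ nhds z₀, ∃ U : Set Z, U ⊆ V ∧ IsOpen U ∧ z₀ ∈ U ∧
      ∀ z ∈ U, IsConnected {g : G | g • z ∈ U}) (w : Z') :
    ∃ U : Set Z, ∃ ℓ : Z → Z', IsOpen U ∧ π w ∈ U ∧ ContinuousOn ℓ U ∧
      (∀ z ∈ U, π (ℓ z) = z) ∧ ℓ (π w) = w ∧ IsOpen (ℓ '' U) ∧
      ∀ z ∈ U, IsPreconnected {g : G | g • z ∈ U} := by
  obtain ⟨e, hwe, rfl⟩ := hπ w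
  obtain ⟨U, hUe, hUo, hwU, hconn⟩ := hU (e w) e.target (e.open_target.mem_nhds (e.map_source hwe))
  exact ⟨U, e.symm, hUo, hwU, e.continuousOn_symm.mono hUe, fun z hz => e.right_inv (hUe hz),
    e.left_inv hwe, e.isOpen_image_symm_of_subset_target hUo hUe,
    fun z hz => (hconn z hz).isPreconnected⟩

end Sheets

section Quotients

variable {G Z Z' : Type*} [Group G] [MulAction G Z] [MulAction G Z'] {π : Z' → Z}

theorem exists_proj_eq_and_mk_eq (hπG : ∀ (g : G) (x : Z'), π (g • x) = g • π x)
    {πq : Quotient (orbitRel G Z') → Quotient (orbitRel G Z)}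
    (hπq : ∀ x : Z', πq (Quotient.mk'' x) = Quotient.mk'' (π x))
    {σ : Quotient (orbitRel G Z) → Quotient (orbitRel G Z')} (hσ : ∀ q, πq (σ q) = q) (z : Z) :
    ∃ w : Z', π w = z ∧ Quotient.mk'' w = σ (Quotient.mk'' z) := by
  obtain ⟨w, hw⟩ := Quotient.exists_rep (σ (Quotient.mk'' z))
  have hπw : (Quotient.mk'' (π w) : Quotient (orbitRel G Z)) = Quotient.mk'' z := by
    rw [← hπq]
    exact (congrArg πq hw).trans (hσ _)
  obtain ⟨g, hg⟩ := orbitRel_apply.1 (Quotient.eq''.1 hπw.symm)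
  refine ⟨g • w, (hπG g w).trans hg, ?_⟩
  rw [← hw]
  exact Quotient.sound' (orbitRel_apply.2 (mem_orbit _ _))

variable [TopologicalSpace Z] [TopologicalSpace Z']

theorem existsUnique_section_quotient_of_equivariant
    {πq : Quotient (orbitRel G Z') → Quotient (orbitRel G Z)}
    (hπq : ∀ x : Z', πq (Quotient.mk'' x) = Quotient.mk'' (π x)) {s : Z → Z'}
    (hs : Continuous s) (hsπ : ∀ z, π (s z) = z) (hsG : ∀ (g : G) (z : Z), s (g • z) = g • s z) :
    ∃! σ : Quotient (orbitRel G Z) → Quotient (orbitRel G Z'),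
      Continuous σ ∧ (∀ q, πq (σ q) = q) ∧ ∀ z : Z, σ (Quotient.mk'' z) = Quotient.mk'' (s z) := by
  have hs_orbit (a b : Z) (hab : orbitRel G Z a b) : orbitRel G Z' (s a) (s b) := by
    obtain ⟨g, rfl⟩ := orbitRel_apply.1 hab
    exact orbitRel_apply.2 (hsG g b ▸ mem_orbit _ _)
  refine ⟨Quotient.map' s hs_orbit, ⟨hs.quotient_map' hs_orbit, fun q => ?_, fun _ => rfl⟩, ?_⟩
  · induction q using Quotient.inductionOn' with
    | h z => rw [Quotient.map'_mk'', hπq, hsπ]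
  · rintro σ ⟨-, -, hσs⟩
    funext q
    induction q using Quotient.inductionOn' with
    | h z => rw [hσs, Quotient.map'_mk'']

variable [TopologicalSpace G] [ContinuousSMul G Z] [ContinuousSMul G Z']

theorem IsCoveringMap.eq_of_apply_eq_of_mk_eq (hπ : IsCoveringMap π)
    (hπG : ∀ (g : G) (x : Z'), π (g • x) = g • π x)
    (hU : ∀ z₀ : Z, ∀ V ∈ nhds z₀, ∃ U : Set Z, U ⊆ V ∧ IsOpen U ∧ z₀ ∈ U ∧
      ∀ z ∈ U, IsConnected {g : G | g • z ∈ U}) {w₁ w₂ : Z'} (h : π w₁ = π w₂)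
    (hq : (Quotient.mk'' w₁ : Quotient (orbitRel G Z')) = Quotient.mk'' w₂) : w₁ = w₂ := by
  obtain ⟨U, ℓ, -, hw₂U, hℓ, hπℓ, hℓw₂, -, hconn⟩ := hπ.isLocalHomeomorph.exists_sheet hU w₂
  calc w₁ = ℓ (π w₁) :=
        hπ.eq_apply_of_mem_orbit hπG hℓ hπℓ hconn ⟨_, hw₂U, hℓw₂⟩ (h ▸ hw₂U)
          (orbitRel_apply.1 (Quotient.eq''.1 hq))
    _ = w₂ := by rw [h, hℓw₂]

theorem IsCoveringMap.continuous_of_mk_eq (hπ : IsCoveringMap π)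
    (hπG : ∀ (g : G) (x : Z'), π (g • x) = g • π x)
    (hU : ∀ z₀ : Z, ∀ V ∈ nhds z₀, ∃ U : Set Z, U ⊆ V ∧ IsOpen U ∧ z₀ ∈ U ∧
      ∀ z ∈ U, IsConnected {g : G | g • z ∈ U})
    {σ : Quotient (orbitRel G Z) → Quotient (orbitRel G Z')} (hσ : Continuous σ) {s : Z → Z'}
    (hsπ : ∀ z, π (s z) = z) (hσs : ∀ z, σ (Quotient.mk'' z) = Quotient.mk'' (s z)) :
    Continuous s := by
  refine continuous_iff_continuousAt.2 fun z₀ => ?_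
  obtain ⟨U, ℓ, hUo, hz₀U, hℓ, hπℓ, hℓs, hℓUo, hconn⟩ := hπ.isLocalHomeomorph.exists_sheet hU (s z₀)
  rw [hsπ] at hz₀U hℓs
  set A := U ∩ (fun z => σ (Quotient.mk'' z)) ⁻¹' (Quotient.mk'' '' (ℓ '' U))
  have hAo : IsOpen A :=
    hUo.inter ((isOpenMap_quotient_mk'_mul _ hℓUo).preimage (hσ.comp continuous_quotient_mk'))
  have hz₀A : z₀ ∈ A := ⟨hz₀U, s z₀, ⟨z₀, hz₀U, hℓs⟩, (hσs z₀).symm⟩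
  have hsℓ : EqOn s ℓ A := by
    rintro z ⟨hzU, x, hx, hxz : Quotient.mk'' x = σ (Quotient.mk'' z)⟩
    rw [hσs] at hxz
    have := hπ.eq_apply_of_mem_orbit hπG hℓ hπℓ hconn hx (by rwa [hsπ])
      (orbitRel_apply.1 (Quotient.eq''.1 hxz.symm))
    rwa [hsπ] at this
  exact (hℓ.continuousAt (hUo.mem_nhds hz₀U)).congr
    (Filter.eventuallyEq_of_mem (hAo.mem_nhds hz₀A) hsℓ.symm)

theorem IsCoveringMap.existsUnique_equivariant_section_of_section_quotient
    (hπ : IsCoveringMap π) (hπG : ∀ (g : G) (x : Z'), π (g • x) = g • π x)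
    (hU : ∀ z₀ : Z, ∀ V ∈ nhds z₀, ∃ U : Set Z, U ⊆ V ∧ IsOpen U ∧ z₀ ∈ U ∧
      ∀ z ∈ U, IsConnected {g : G | g • z ∈ U})
    {πq : Quotient (orbitRel G Z') → Quotient (orbitRel G Z)}
    (hπq : ∀ x : Z', πq (Quotient.mk'' x) = Quotient.mk'' (π x))
    {σ : Quotient (orbitRel G Z) → Quotient (orbitRel G Z')} (hσ : Continuous σ)
    (hσπq : ∀ q, πq (σ q) = q) :
    ∃! s : Z → Z', Continuous s ∧ (∀ z, π (s z) = z) ∧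
      (∀ (g : G) (z : Z), s (g • z) = g • s z) ∧
      ∀ z : Z, σ (Quotient.mk'' z) = Quotient.mk'' (s z) := by
  choose s hsπ hsσ using exists_proj_eq_and_mk_eq hπG hπq hσπq
  have hσs (z : Z) : σ (Quotient.mk'' z) = Quotient.mk'' (s z) := (hsσ z).symm
  have hsG (g : G) (z : Z) : s (g • z) = g • s z := by
    refine hπ.eq_of_apply_eq_of_mk_eq hπG hU (by rw [hsπ, hπG, hsπ]) ?_
    calc Quotient.mk'' (s (g • z)) = σ (Quotient.mk'' (g • z)) := hsσ _
      _ = σ (Quotient.mk'' z) := congrArg σ orbitRel.Quotient.quotient_smul_eq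
      _ = Quotient.mk'' (g • s z) := (hσs z).trans orbitRel.Quotient.quotient_smul_eq.symm
  refine ⟨s, ⟨hπ.continuous_of_mk_eq hπG hU hσ hsπ hσs, hsπ, hsG, hσs⟩, ?_⟩
  rintro s' ⟨-, hs'π, -, hσs'⟩
  funext z
  exact hπ.eq_of_apply_eq_of_mk_eq hπG hU (by rw [hs'π, hsπ]) (by rw [← hσs', hσs])

end Quotients

theorem IsCoveringMap.section_apply_smul {G Z Z' : Type*} [Monoid G] [TopologicalSpace G]
    [PreconnectedSpace G] [TopologicalSpace Z] [TopologicalSpace Z'] [MulAction G Z]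
    [MulAction G Z'] [ContinuousSMul G Z] [ContinuousSMul G Z'] {π : Z' → Z}
    (hπ : IsCoveringMap π) (hπG : ∀ (g : G) (x : Z'), π (g • x) = g • π x) {s : Z → Z'}
    (hs : Continuous s) (hsπ : ∀ z, π (s z) = z) (g : G) (z : Z) : s (g • z) = g • s z :=
  congrFun (hπ.eq_of_comp_eq (g₁ := fun h : G => s (h • z)) (g₂ := fun h => h • s z)
    (by fun_prop) (by fun_prop) (funext fun h => by simp only [Function.comp_apply, hπG, hsπ])
    1 (by simp only [one_smul])) g

theorem stmt4_general {G Z Z' : Type*} [Group G] [TopologicalSpace G]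
    [TopologicalSpace Z] [TopologicalSpace Z']
    [MulAction G Z] [MulAction G Z'] [ContinuousSMul G Z] [ContinuousSMul G Z']
    (π : Z' → Z) (hcov : IsCoveringMap π)
    (hequiv : ∀ (g : G) (z : Z'), π (g • z) = g • π z)
    (hU : ∀ z₀ : Z, ∀ V ∈ nhds z₀, ∃ U : Set Z, U ⊆ V ∧ IsOpen U ∧ z₀ ∈ U ∧
      ∀ z ∈ U, IsConnected {g : G | g • z ∈ U})
    (πq : Quotient (MulAction.orbitRel G Z') → Quotient (MulAction.orbitRel G Z))
    (hπq : ∀ z : Z', πq (Quotient.mk'' z) = Quotient.mk'' (π z)) :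
    -- every `G`-equivariant continuous section of `π` descends to a unique
    -- continuous section of `πq`:
    (∀ s : Z → Z', Continuous s → (∀ z, π (s z) = z) →
        (∀ (g : G) (z : Z), s (g • z) = g • s z) →
      ∃! σ : Quotient (MulAction.orbitRel G Z) → Quotient (MulAction.orbitRel G Z'),
        Continuous σ ∧ (∀ q, πq (σ q) = q) ∧
          ∀ z : Z, σ (Quotient.mk'' z) = Quotient.mk'' (s z)) ∧
    -- every continuous section of `πq` is the pull-back of a unique `G`-equivariant
    -- continuous section of `π`:
    (∀ σ : Quotient (MulAction.orbitRel G Z) → Quotient (MulAction.orbitRel G Z'),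
        Continuous σ → (∀ q, πq (σ q) = q) →
      ∃! s : Z → Z', Continuous s ∧ (∀ z, π (s z) = z) ∧
        (∀ (g : G) (z : Z), s (g • z) = g • s z) ∧
        ∀ z : Z, σ (Quotient.mk'' z) = Quotient.mk'' (s z)) ∧
    -- if `G` is connected, any continuous section of `π` is `G`-equivariant:
    (ConnectedSpace G → ∀ s : Z → Z', Continuous s → (∀ z, π (s z) = z) →
      ∀ (g : G) (z : Z), s (g • z) = g • s z) :=
  ⟨fun _ hs hsπ hsG => existsUnique_section_quotient_of_equivariant hπq hs hsπ hsG,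
    fun _ hσ hσπq =>
      hcov.existsUnique_equivariant_section_of_section_quotient hequiv hU hπq hσ hσπq,
    fun _ _ hs hsπ => hcov.section_apply_smul hequiv hs hsπ⟩

/-- Pull-back along the quotient map gives a bijection between continuous sections of the
induced covering `Z̃/G → Z/G` and `G`-equivariant continuous sections of `π : Z̃ → Z`;
moreover if `G` is connected then every continuous section of `π` is `G`-equivariant. -/
theorem stmt4 {G Z Z' : Type*} [Group G] [TopologicalSpace G] [IsTopologicalGroup G]
    [TopologicalSpace Z] [TopologicalSpace Z']
    [MulAction G Z] [MulAction G Z'] [ContinuousSMul G Z] [ContinuousSMul G Z']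
    (π : Z' → Z) (hcov : IsCoveringMap π)
    (hequiv : ∀ (g : G) (z : Z'), π (g • z) = g • π z)
    (hU : ∀ z₀ : Z, ∀ V ∈ nhds z₀, ∃ U : Set Z, U ⊆ V ∧ IsOpen U ∧ z₀ ∈ U ∧
      ∀ z ∈ U, IsConnected {g : G | g • z ∈ U})
    (πq : Quotient (MulAction.orbitRel G Z') → Quotient (MulAction.orbitRel G Z))
    (hπq : ∀ z : Z', πq (Quotient.mk'' z) = Quotient.mk'' (π z)) :
    -- every `G`-equivariant continuous section of `π` descends to a unique
    -- continuous section of `πq`: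
    (∀ s : Z → Z', Continuous s → (∀ z, π (s z) = z) →
        (∀ (g : G) (z : Z), s (g • z) = g • s z) →
      ∃! σ : Quotient (MulAction.orbitRel G Z) → Quotient (MulAction.orbitRel G Z'),
        Continuous σ ∧ (∀ q, πq (σ q) = q) ∧
          ∀ z : Z, σ (Quotient.mk'' z) = Quotient.mk'' (s z)) ∧
    -- every continuous section of `πq` is the pull-back of a unique `G`-equivariant
    -- continuous section of `π`:
    (∀ σ : Quotient (MulAction.orbitRel G Z) → Quotient (MulAction.orbitRel G Z'),
        Continuous σ → (∀ q, πq (σ q) = q) →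
      ∃! s : Z → Z', Continuous s ∧ (∀ z, π (s z) = z) ∧
        (∀ (g : G) (z : Z), s (g • z) = g • s z) ∧
        ∀ z : Z, σ (Quotient.mk'' z) = Quotient.mk'' (s z)) ∧
    -- if `G` is connected, any continuous section of `π` is `G`-equivariant:
    (ConnectedSpace G → ∀ s : Z → Z', Continuous s → (∀ z, π (s z) = z) →
      ∀ (g : G) (z : Z), s (g • z) = g • s z) :=
  stmt4_general π hcov hequiv hU πq hπq
end

section
/- Let E and F be normed vector spaces, J : E → F an injective bounded linear operator, and P_n : ℝ^m → E a sequence of linear maps converging in operator norm to an injective linear map P. Then there exists a constant C < ∞ and N such that for all n ≥ N and all x ∈ ℝ^m, ‖P_n x‖ ≤ C ‖J(P_n x)‖. -/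
/-- If `J : E → F` is an injective bounded operator and `Pₙ : ℝᵐ → E` converge in operator
norm to an injective linear map `P`, then there are `C < ∞` and `N` such that
`‖Pₙ x‖ ≤ C ‖J (Pₙ x)‖` for all `n ≥ N` and all `x`. -/
theorem stmt7 {E F : Type*}
    [NormedAddCommGroup E] [NormedSpace ℝ E]
    [NormedAddCommGroup F] [NormedSpace ℝ F]
    {m : ℕ}
    (J : E →L[ℝ] F) (hJ : Function.Injective J)
    (P : ℕ → EuclideanSpace ℝ (Fin m) →L[ℝ] E)
    (Plim : EuclideanSpace ℝ (Fin m) →L[ℝ] E)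
    (hconv : Filter.Tendsto P Filter.atTop (nhds Plim))
    (hPinj : Function.Injective Plim) :
    ∃ C : ℝ, ∃ N : ℕ, ∀ n ≥ N, ∀ x : EuclideanSpace ℝ (Fin m),
      ‖P n x‖ ≤ C * ‖J (P n x)‖ := by
  rcases Nat.eq_zero_or_pos m with hm | hm
  · refine ⟨0, 0, fun n _ x => ?_⟩
    subst hm
    have hx : x = 0 := Subsingleton.elim x 0
    simp [hx]
  · set S := Metric.sphere (0 : EuclideanSpace ℝ (Fin m)) 1 with hS
    have hScomp : IsCompact S := isCompact_sphere 0 1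
    haveI : Nonempty (Fin m) := ⟨⟨0, hm⟩⟩
    haveI : Nontrivial (EuclideanSpace ℝ (Fin m)) := inferInstance
    have hSne : S.Nonempty := by
      apply NormedSpace.sphere_nonempty.2; norm_num
    have hcont : ContinuousOn (fun x => ‖J (Plim x)‖) S :=
      ((J.continuous.comp Plim.continuous).norm).continuousOn
    obtain ⟨x₀, hx₀S, hx₀min⟩ := hScomp.exists_isMinOn hSne hcont
    set δ := ‖J (Plim x₀)‖ with hδdef
    have hδpos : 0 < δ := by
      have hx₀ne : x₀ ≠ 0 := by
        intro h
        rw [hS, h] at hx₀S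
        simp at hx₀S
      have h1 : Plim x₀ ≠ 0 := fun h => hx₀ne (hPinj (by simpa using h))
      have h2 : J (Plim x₀) ≠ 0 := fun h => h1 (hJ (by simpa using h))
      exact norm_pos_iff.2 h2
    set ε := δ / (2 * (‖J‖ + 1)) with hε
    have hJnn : (0:ℝ) ≤ ‖J‖ := norm_nonneg _
    have hεpos : 0 < ε := by positivity
    have hJε : ‖J‖ * ε ≤ δ / 2 := by
      rw [hε, mul_div_assoc', div_le_div_iff₀ (by positivity) (by norm_num)]
      nlinarith
    obtain ⟨N, hN⟩ := Metric.tendsto_atTop.mp hconv ε hεpos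
    set C := 2 * (‖Plim‖ + ε) / δ with hC
    have hCnn : 0 ≤ C := by positivity
    refine ⟨C, N, fun n hn x => ?_⟩
    have hdist : ‖P n - Plim‖ < ε := by
      have := hN n hn
      rwa [dist_eq_norm] at this
    -- main claim on sphere
    have key : ∀ u ∈ S, ‖P n u‖ ≤ C * ‖J (P n u)‖ := by
      intro u huS
      have hu1 : ‖u‖ = 1 := by simpa [hS] using huS
      have h1 : ‖P n u - Plim u‖ ≤ ε := by
        have := (P n - Plim).le_opNorm u
        simp only [ContinuousLinearMap.sub_apply] at this
        calc ‖P n u - Plim u‖ ≤ ‖P n - Plim‖ * ‖u‖ := this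
          _ ≤ ε := by rw [hu1]; linarith
      have h2 : ‖J (P n u) - J (Plim u)‖ ≤ ‖J‖ * ε := by
        calc ‖J (P n u) - J (Plim u)‖ = ‖J (P n u - Plim u)‖ := by rw [map_sub]
          _ ≤ ‖J‖ * ‖P n u - Plim u‖ := J.le_opNorm _
          _ ≤ ‖J‖ * ε := by nlinarith
      have h3 : δ ≤ ‖J (Plim u)‖ := hx₀min huS
      have h4 : δ / 2 ≤ ‖J (P n u)‖ := by
        have := norm_sub_norm_le (J (Plim u)) (J (P n u))
        rw [norm_sub_rev] at this
        linarith
      have h5 : ‖P n u‖ ≤ ‖Plim‖ + ε := by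
        have h6 : ‖Plim u‖ ≤ ‖Plim‖ := by
          have := Plim.le_opNorm u
          rw [hu1] at this; linarith
        have := norm_sub_norm_le (P n u) (Plim u)
        linarith
      have hCδ : C * (δ / 2) = ‖Plim‖ + ε := by
        rw [hC]; field_simp
      calc ‖P n u‖ ≤ ‖Plim‖ + ε := h5
        _ = C * (δ / 2) := hCδ.symm
        _ ≤ C * ‖J (P n u)‖ := by nlinarith
    rcases eq_or_ne x 0 with hx0 | hx0
    · simp [hx0]
    · have hxn : (0:ℝ) < ‖x‖ := norm_pos_iff.2 hx0
      set u : EuclideanSpace ℝ (Fin m) := ‖x‖⁻¹ • x with hu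
      have huS : u ∈ S := by
        simp [hS, hu, norm_smul, abs_of_pos (inv_pos.2 hxn), inv_mul_cancel₀ hxn.ne']
      have hxu : x = ‖x‖ • u := by
        rw [hu, smul_smul, mul_inv_cancel₀ hxn.ne', one_smul]
      have h1 : ‖P n x‖ = ‖x‖ * ‖P n u‖ := by
        conv_lhs => rw [hxu]
        rw [map_smul, norm_smul, Real.norm_eq_abs, abs_of_pos hxn]
      have h2 : ‖J (P n x)‖ = ‖x‖ * ‖J (P n u)‖ := by
        conv_lhs => rw [hxu]
        rw [map_smul, map_smul, norm_smul, Real.norm_eq_abs, abs_of_pos hxn]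
      have := key u huS
      rw [h1, h2]
      calc ‖x‖ * ‖P n u‖ ≤ ‖x‖ * (C * ‖J (P n u)‖) := by nlinarith
        _ = C * (‖x‖ * ‖J (P n u)‖) := by ring
end

section
/- Let L : E → F be a Fredholm operator of index 0 between Banach spaces and let A, B be correctors of L. Set P = L + A and Q = L + B. Then Q P⁻¹ is an automorphism of F mapping any finite-dimensional subspace F₀ ⊆ F containing im(A − B) into itself, and the sign of the determinant of the induced map F₀ → F₀ is independent of the choice of such F₀. -/
/-!
Writing `P = L + A` and `Q = L + B`, we have `Q P⁻¹ = 1 + (B - A) P⁻¹`, a finite-rank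
perturbation of the identity with range in `im (A - B)`. For such a map `T = 1 + N` and
subspaces `F₀ ≤ F₁` containing the range of `N`, the restrictions of `T` to `F₀` and `F₁` are
`1 + M ι` and `1 + ι M`, with `ι : F₀ → F₁` the inclusion and `M` the corestriction of `N`,
so they have the same determinant by the Weinstein–Aronszajn identity. Comparing two
admissible subspaces with their sum shows that the determinant itself, not only its sign,
does not depend on the subspace.
-/

namespace LinearMap

variable {K V W : Type*} [Field K] [AddCommGroup V] [Module K V] [AddCommGroup W] [Module K W]

theorem det_one_add_comp_comm [FiniteDimensional K V] [FiniteDimensional K W]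
    (f : V →ₗ[K] W) (g : W →ₗ[K] V) :
    LinearMap.det (1 + g ∘ₗ f) = LinearMap.det (1 + f ∘ₗ g) := by
  let bV := Module.finBasis K V
  let bW := Module.finBasis K W
  rw [← det_toMatrix bV, ← det_toMatrix bW, map_add, map_add, toMatrix_one, toMatrix_one,
    toMatrix_comp bV bW bV, toMatrix_comp bW bV bW, Matrix.det_one_add_mul_comm]

theorem mapsTo_of_range_sub_one_le {T : V →ₗ[K] V} {S : Submodule K V}
    (hT : range (T - 1) ≤ S) : ∀ x ∈ S, T x ∈ S := fun x hx => by
  simpa using S.add_mem (hT (mem_range_self (T - 1) x)) hx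

theorem det_restrict_eq_of_range_sub_one_le {T : V →ₗ[K] V} {S₀ S₁ : Submodule K V}
    [FiniteDimensional K S₁] (hS : S₀ ≤ S₁) (hT : range (T - 1) ≤ S₀)
    (h₀ : ∀ x ∈ S₀, T x ∈ S₀) (h₁ : ∀ x ∈ S₁, T x ∈ S₁) :
    LinearMap.det (T.restrict h₀) = LinearMap.det (T.restrict h₁) := by
  have : FiniteDimensional K S₀ := Submodule.finiteDimensional_of_le hS
  let M : S₁ →ₗ[K] S₀ :=
    ((T - 1) ∘ₗ S₁.subtype).codRestrict S₀ fun x => hT (mem_range_self _ _)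
  let ι : S₀ →ₗ[K] S₁ := Submodule.inclusion hS
  have e₀ : T.restrict h₀ = 1 + M ∘ₗ ι := by ext; simp [M, ι]
  have e₁ : T.restrict h₁ = 1 + ι ∘ₗ M := by ext; simp [M, ι]
  rw [e₀, e₁, det_one_add_comp_comm]

end LinearMap

theorem LinearEquiv.range_comp_symm_sub_one_le {R E F : Type*} [Ring R] [AddCommGroup E]
    [Module R E] [AddCommGroup F] [Module R F] (P : E ≃ₗ[R] F) (Q : E →ₗ[R] F) :
    LinearMap.range (Q ∘ₗ (P.symm : F →ₗ[R] E) - 1) ≤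
      LinearMap.range ((P : E →ₗ[R] F) - Q) := by
  rintro _ ⟨y, rfl⟩
  exact ⟨-P.symm y, by simp [sub_eq_add_neg, add_comm]⟩

theorem stmt10_general {E F : Type*}
    [NormedAddCommGroup E] [NormedSpace ℝ E]
    [NormedAddCommGroup F] [NormedSpace ℝ F]
    (L A B : E →L[ℝ] F)
    (eP eQ : E ≃L[ℝ] F)
    (heP : (eP : E →L[ℝ] F) = L + A) (heQ : (eQ : E →L[ℝ] F) = L + B) :
    Function.Bijective
      ((((L + B).comp (eP.symm : F →L[ℝ] E)) : F →L[ℝ] F) : F →ₗ[ℝ] F) ∧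
    (∀ F₀ : Submodule ℝ F, FiniteDimensional ℝ F₀ →
      LinearMap.range ((A - B : E →L[ℝ] F) : E →ₗ[ℝ] F) ≤ F₀ →
      ∀ x ∈ F₀, ((((L + B).comp (eP.symm : F →L[ℝ] E)) : F →L[ℝ] F) : F →ₗ[ℝ] F) x ∈ F₀) ∧
    ∀ (F₀ F₁ : Submodule ℝ F), FiniteDimensional ℝ F₀ → FiniteDimensional ℝ F₁ →
      LinearMap.range ((A - B : E →L[ℝ] F) : E →ₗ[ℝ] F) ≤ F₀ →
      LinearMap.range ((A - B : E →L[ℝ] F) : E →ₗ[ℝ] F) ≤ F₁ →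
      ∀ (h₀ : ∀ x ∈ F₀,
          ((((L + B).comp (eP.symm : F →L[ℝ] E)) : F →L[ℝ] F) : F →ₗ[ℝ] F) x ∈ F₀)
        (h₁ : ∀ x ∈ F₁,
          ((((L + B).comp (eP.symm : F →L[ℝ] E)) : F →L[ℝ] F) : F →ₗ[ℝ] F) x ∈ F₁),
      (0 < LinearMap.det
          (LinearMap.restrict
            ((((L + B).comp (eP.symm : F →L[ℝ] E)) : F →L[ℝ] F) : F →ₗ[ℝ] F) h₀) ↔
       0 < LinearMap.det
          (LinearMap.restrict
            ((((L + B).comp (eP.symm : F →L[ℝ] E)) : F →L[ℝ] F) : F →ₗ[ℝ] F) h₁)) := by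
  set T : F →ₗ[ℝ] F := (((L + B).comp (eP.symm : F →L[ℝ] E) : F →L[ℝ] F) : F →ₗ[ℝ] F)
  have hT : LinearMap.range (T - 1) ≤ LinearMap.range ((A - B : E →L[ℝ] F) : E →ₗ[ℝ] F) := by
    have hPQ : (eP : E →ₗ[ℝ] F) - (L + B : E →L[ℝ] F) = ((A - B : E →L[ℝ] F) : E →ₗ[ℝ] F) := by
      ext x; simp [← ContinuousLinearEquiv.coe_coe, heP]
    have := eP.toLinearEquiv.range_comp_symm_sub_one_le (L + B : E →L[ℝ] F)
    rwa [hPQ] at this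
  refine ⟨?_, fun F₀ _ hF₀ => LinearMap.mapsTo_of_range_sub_one_le (hT.trans hF₀), ?_⟩
  · have : ⇑T = eQ ∘ eP.symm := by ext; simp [T, ← heQ]
    exact this ▸ eQ.bijective.comp eP.symm.bijective
  · intro F₀ F₁ _ _ hF₀ hF₁ h₀ h₁
    have h₂ := LinearMap.mapsTo_of_range_sub_one_le (hT.trans (hF₀.trans (le_sup_left (b := F₁))))
    rw [LinearMap.det_restrict_eq_of_range_sub_one_le le_sup_left (hT.trans hF₀) h₀ h₂,
      LinearMap.det_restrict_eq_of_range_sub_one_le le_sup_right (hT.trans hF₁) h₁ h₂]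

/-- For correctors `A`, `B` of a Fredholm operator `L` of index 0, with `P = L + A` and
`Q = L + B` invertible, `QP⁻¹` is an automorphism of `F` mapping any finite-dimensional
subspace `F₀ ⊇ im(A - B)` into itself, and the sign of the determinant of the induced
endomorphism of `F₀` is independent of the choice of `F₀`. -/
theorem stmt10 {E F : Type*}
    [NormedAddCommGroup E] [NormedSpace ℝ E] [CompleteSpace E]
    [NormedAddCommGroup F] [NormedSpace ℝ F] [CompleteSpace F]
    (L A B : E →L[ℝ] F)
    (hA : FiniteDimensional ℝ (LinearMap.range (A : E →ₗ[ℝ] F)))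
    (hB : FiniteDimensional ℝ (LinearMap.range (B : E →ₗ[ℝ] F)))
    (eP eQ : E ≃L[ℝ] F)
    (heP : (eP : E →L[ℝ] F) = L + A) (heQ : (eQ : E →L[ℝ] F) = L + B) :
    Function.Bijective
      ((((L + B).comp (eP.symm : F →L[ℝ] E)) : F →L[ℝ] F) : F →ₗ[ℝ] F) ∧
    (∀ F₀ : Submodule ℝ F, FiniteDimensional ℝ F₀ →
      LinearMap.range ((A - B : E →L[ℝ] F) : E →ₗ[ℝ] F) ≤ F₀ →
      ∀ x ∈ F₀, ((((L + B).comp (eP.symm : F →L[ℝ] E)) : F →L[ℝ] F) : F →ₗ[ℝ] F) x ∈ F₀) ∧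
    ∀ (F₀ F₁ : Submodule ℝ F), FiniteDimensional ℝ F₀ → FiniteDimensional ℝ F₁ →
      LinearMap.range ((A - B : E →L[ℝ] F) : E →ₗ[ℝ] F) ≤ F₀ →
      LinearMap.range ((A - B : E →L[ℝ] F) : E →ₗ[ℝ] F) ≤ F₁ →
      ∀ (h₀ : ∀ x ∈ F₀,
          ((((L + B).comp (eP.symm : F →L[ℝ] E)) : F →L[ℝ] F) : F →ₗ[ℝ] F) x ∈ F₀)
        (h₁ : ∀ x ∈ F₁,
          ((((L + B).comp (eP.symm : F →L[ℝ] E)) : F →L[ℝ] F) : F →ₗ[ℝ] F) x ∈ F₁),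
      (0 < LinearMap.det
          (LinearMap.restrict
            ((((L + B).comp (eP.symm : F →L[ℝ] E)) : F →L[ℝ] F) : F →ₗ[ℝ] F) h₀) ↔
       0 < LinearMap.det
          (LinearMap.restrict
            ((((L + B).comp (eP.symm : F →L[ℝ] E)) : F →L[ℝ] F) : F →ₗ[ℝ] F) h₁)) :=
  stmt10_general L A B eP eQ heP heQ
end

section
/- Benevieri–Furi equivalence using QP⁻¹ agrees with equivalence using P⁻¹Q: for L Fredholm of index 0 with correctors A, B, and P = L+A, Q = L+B, and F₀ ⊇ im(A−B) finite-dimensional and E₀' ⊇ im(P⁻¹(B−A)) finite-dimensional, det(QP⁻¹|_{F₀}) > 0 if and only if det(P⁻¹Q|_{E₀'}) > 0. -/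
/-- If `g` acts as the identity modulo an invariant subspace `V`, then the determinant
of `g` equals the determinant of its restriction to `V`. -/
lemma det_eq_det_restrict_of_sub_mem {𝕜 M : Type*} [Field 𝕜] [AddCommGroup M] [Module 𝕜 M]
    [FiniteDimensional 𝕜 M] (g : M →ₗ[𝕜] M) (V : Submodule 𝕜 M)
    (hV : ∀ x ∈ V, g x ∈ V) (hr : ∀ x : M, g x - x ∈ V) :
    LinearMap.det g = LinearMap.det (g.restrict hV) := by
  classical
  obtain ⟨U, hU⟩ := Submodule.exists_isCompl V
  set e := Submodule.prodEquivOfIsCompl V U hU with he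
  let bV := Module.finBasis 𝕜 V
  let bU := Module.finBasis 𝕜 U
  let b : Module.Basis _ 𝕜 M := (bV.prod bU).map e
  have hb_inl : ∀ i, b (Sum.inl i) = (bV i : M) := by
    intro i
    simp [b, Module.Basis.map_apply, Module.Basis.prod_apply, he, Submodule.coe_prodEquivOfIsCompl']
  have hb_inr : ∀ i, b (Sum.inr i) = (bU i : M) := by
    intro i
    simp [b, Module.Basis.map_apply, Module.Basis.prod_apply, he, Submodule.coe_prodEquivOfIsCompl']
  have hrepr : ∀ (x : M) (j), b.repr x j = (bV.prod bU).repr (e.symm x) j := by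
    intro x j
    simp [b, Module.Basis.map_repr]
  have hreprV : ∀ (x : M) (hx : x ∈ V),
      (∀ i, b.repr x (Sum.inl i) = bV.repr ⟨x, hx⟩ i) ∧ ∀ i, b.repr x (Sum.inr i) = 0 := by
    intro x hx
    have hsymm : e.symm x = (⟨x, hx⟩, 0) := by
      rw [LinearEquiv.symm_apply_eq]
      simp [he, Submodule.coe_prodEquivOfIsCompl']
    constructor <;> intro i <;> simp [hrepr, hsymm]
  rw [← LinearMap.det_toMatrix b g, ← LinearMap.det_toMatrix bV (g.restrict hV)]
  have h21 : (LinearMap.toMatrix b b g).toBlocks₂₁ = 0 := by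
    ext i k
    have hmem : g (b (Sum.inl k)) ∈ V := by rw [hb_inl]; exact hV _ (bV k).2
    simp [Matrix.toBlocks₂₁, LinearMap.toMatrix_apply, (hreprV _ hmem).2]
  have h22 : (LinearMap.toMatrix b b g).toBlocks₂₂ = 1 := by
    ext i k
    have hsymm : e.symm (g (b (Sum.inr k))) =
        (⟨g (bU k : M) - (bU k : M), hr _⟩, bU k) := by
      rw [LinearEquiv.symm_apply_eq]
      simp only [he, Submodule.coe_prodEquivOfIsCompl']
      rw [hb_inr]
      abel
    simp [Matrix.toBlocks₂₂, LinearMap.toMatrix_apply, hrepr, hsymm, Matrix.one_apply,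
      Module.Basis.repr_self, Finsupp.single_apply, eq_comm]
  have h11 : (LinearMap.toMatrix b b g).toBlocks₁₁ = LinearMap.toMatrix bV bV (g.restrict hV) := by
    ext i k
    have hmem : g (b (Sum.inl k)) ∈ V := by rw [hb_inl]; exact hV _ (bV k).2
    have heq : (⟨g (b (Sum.inl k)), hmem⟩ : V) = (g.restrict hV) (bV k) := by
      apply Subtype.ext
      show g (b (Sum.inl k)) = ((g.restrict hV) (bV k) : M)
      rw [LinearMap.restrict_coe_apply, hb_inl]
    simp only [Matrix.toBlocks₁₁, LinearMap.toMatrix_apply, Matrix.of_apply]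
    rw [(hreprV _ hmem).1 i, heq]
  calc (LinearMap.toMatrix b b g).det
      = (Matrix.fromBlocks (LinearMap.toMatrix b b g).toBlocks₁₁
          (LinearMap.toMatrix b b g).toBlocks₁₂
          (LinearMap.toMatrix b b g).toBlocks₂₁
          (LinearMap.toMatrix b b g).toBlocks₂₂).det := by
        rw [Matrix.fromBlocks_toBlocks]
    _ = (LinearMap.toMatrix bV bV (g.restrict hV)).det := by
        rw [h11, h21, h22, Matrix.det_fromBlocks_zero₂₁, Matrix.det_one, mul_one]

lemma det_restrict_eq_det_restrict_of_le {𝕜 M : Type*} [Field 𝕜] [AddCommGroup M] [Module 𝕜 M]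
    {g : M →ₗ[𝕜] M} {V W : Submodule 𝕜 M} [FiniteDimensional 𝕜 W] (hVW : V ≤ W)
    (hV : ∀ x ∈ V, g x ∈ V) (hW : ∀ x ∈ W, g x ∈ W) (hr : ∀ x : M, g x - x ∈ V) :
    LinearMap.det (g.restrict hW) = LinearMap.det (g.restrict hV) := by
  set gW := g.restrict hW with hgW
  let V' : Submodule 𝕜 W := V.comap W.subtype
  have hV' : ∀ x ∈ V', gW x ∈ V' := by
    intro x hx
    simpa [V', hgW, LinearMap.restrict_coe_apply] using hV _ hx
  have hr' : ∀ x : W, gW x - x ∈ V' := by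
    intro x
    simpa [V', hgW, LinearMap.restrict_coe_apply] using hr (x : M)
  rw [det_eq_det_restrict_of_sub_mem gW V' hV' hr']
  set φ := Submodule.comapSubtypeEquivOfLe hVW with hφ
  have key : gW.restrict hV' = (φ.symm : V →ₗ[𝕜] V') ∘ₗ (g.restrict hV) ∘ₗ (φ : V' →ₗ[𝕜] V) := by
    ext x
    simp only [hgW, hφ, LinearMap.coe_comp, Function.comp_apply, LinearEquiv.coe_coe,
      LinearMap.restrict_coe_apply, Submodule.comapSubtypeEquivOfLe_symm_apply,
      Submodule.coe_subtype]
    congr 1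
  rw [key]
  have := LinearMap.det_conj (g.restrict hV) φ.symm
  simpa using this


/-- Benevieri–Furi equivalence via `QP⁻¹` agrees with the one via `P⁻¹Q`:
the determinant of `QP⁻¹` on a finite-dimensional `F₀ ⊇ im(A - B)` is positive
iff the determinant of `P⁻¹Q` on a finite-dimensional `E₀ ⊇ im(P⁻¹(B - A))` is positive. -/
theorem stmt11 {E F : Type*}
    [NormedAddCommGroup E] [NormedSpace ℝ E] [CompleteSpace E]
    [NormedAddCommGroup F] [NormedSpace ℝ F] [CompleteSpace F]
    (L A B : E →L[ℝ] F)
    (hA : FiniteDimensional ℝ (LinearMap.range (A : E →ₗ[ℝ] F)))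
    (hB : FiniteDimensional ℝ (LinearMap.range (B : E →ₗ[ℝ] F)))
    (eP eQ : E ≃L[ℝ] F)
    (heP : (eP : E →L[ℝ] F) = L + A) (heQ : (eQ : E →L[ℝ] F) = L + B)
    (F₀ : Submodule ℝ F) (hF₀ : FiniteDimensional ℝ F₀)
    (hF₀ge : LinearMap.range ((A - B : E →L[ℝ] F) : E →ₗ[ℝ] F) ≤ F₀)
    (E₀ : Submodule ℝ E) (hE₀ : FiniteDimensional ℝ E₀)
    (hE₀ge : LinearMap.range
        (((eP.symm : F →L[ℝ] E).comp (B - A : E →L[ℝ] F) : E →L[ℝ] E) : E →ₗ[ℝ] E) ≤ E₀)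
    (h₀ : ∀ x ∈ F₀,
      ((((L + B).comp (eP.symm : F →L[ℝ] E)) : F →L[ℝ] F) : F →ₗ[ℝ] F) x ∈ F₀)
    (h₁ : ∀ x ∈ E₀,
      ((((eP.symm : F →L[ℝ] E).comp (L + B)) : E →L[ℝ] E) : E →ₗ[ℝ] E) x ∈ E₀) :
    0 < LinearMap.det
        (LinearMap.restrict
          ((((L + B).comp (eP.symm : F →L[ℝ] E)) : F →L[ℝ] F) : F →ₗ[ℝ] F) h₀) ↔
    0 < LinearMap.det
        (LinearMap.restrict
          ((((eP.symm : F →L[ℝ] E).comp (L + B)) : E →L[ℝ] E) : E →ₗ[ℝ] E) h₁) := by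
    classical
  set h : F →ₗ[ℝ] F := ((((L + B).comp (eP.symm : F →L[ℝ] E)) : F →L[ℝ] F) : F →ₗ[ℝ] F) with hh
  set g : E →ₗ[ℝ] E :=
    ((((eP.symm : F →L[ℝ] E).comp (L + B)) : E →L[ℝ] E) : E →ₗ[ℝ] E) with hgdef
  set eL : F ≃ₗ[ℝ] E := eP.symm.toLinearEquiv with heL
  -- basic identities
  have hPinv : ∀ x : E, (eP.symm : F →L[ℝ] E) ((L + A) x) = x := by
    intro x
    rw [← heP]
    exact eP.symm_apply_apply x
  have hgsub : ∀ x : E, g x - x = (eP.symm : F →L[ℝ] E) ((B - A) x) := by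
    intro x
    have step1 : g x - x =
        (eP.symm : F →L[ℝ] E) ((L + B) x) - (eP.symm : F →L[ℝ] E) ((L + A) x) := by
      rw [hPinv x]; rfl
    rw [step1, ← map_sub]
    congr 1
    simp only [ContinuousLinearMap.add_apply, ContinuousLinearMap.sub_apply]
    abel
  have hgE₀ : ∀ x : E, g x - x ∈ E₀ := by
    intro x
    rw [hgsub]
    exact hE₀ge ⟨x, rfl⟩
  -- E₁ := eP⁻¹(F₀)
  set E₁ : Submodule ℝ E := F₀.map (eL : F →ₗ[ℝ] E) with hE₁
  have hgE₁ : ∀ x : E, g x - x ∈ E₁ := by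
    intro x
    rw [hgsub]
    refine ⟨(B - A) x, ?_, rfl⟩
    have hBA : (B - A) x = -((A - B : E →L[ℝ] F) x) := by
      simp only [ContinuousLinearMap.sub_apply]
      abel
    rw [hBA]
    exact neg_mem (hF₀ge ⟨x, rfl⟩)
  have hE₁inv : ∀ x ∈ E₁, g x ∈ E₁ := by
    rintro _ ⟨y, hy, rfl⟩
    exact ⟨h y, h₀ y hy, rfl⟩
  -- finite dimensionality
  haveI : FiniteDimensional ℝ E₁ := Module.Finite.map F₀ (eL : F →ₗ[ℝ] E)
  haveI : FiniteDimensional ℝ (E₀ ⊔ E₁ : Submodule ℝ E) := Submodule.finiteDimensional_sup E₀ E₁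
  -- invariance of the sup
  have hWinv : ∀ x ∈ E₀ ⊔ E₁, g x ∈ E₀ ⊔ E₁ := by
    intro x hx
    rcases Submodule.mem_sup.1 hx with ⟨y, hy, z, hz, rfl⟩
    rw [map_add]
    exact Submodule.add_mem _ (Submodule.mem_sup_left (h₁ y hy))
      (Submodule.mem_sup_right (hE₁inv z hz))
  -- the two determinants on E-side agree
  have detE : LinearMap.det (g.restrict h₁) = LinearMap.det (g.restrict hE₁inv) := by
    rw [← det_restrict_eq_det_restrict_of_le (le_sup_left : E₀ ≤ E₀ ⊔ E₁) h₁ hWinv hgE₀,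
      ← det_restrict_eq_det_restrict_of_le (le_sup_right : E₁ ≤ E₀ ⊔ E₁) hE₁inv hWinv hgE₁]
  -- conjugation between F₀ and E₁
  set φ : F₀ ≃ₗ[ℝ] E₁ := eL.submoduleMap F₀ with hφ
  have key : h.restrict h₀ = (φ.symm : E₁ →ₗ[ℝ] F₀) ∘ₗ (g.restrict hE₁inv) ∘ₗ (φ : F₀ →ₗ[ℝ] E₁) := by
    ext x
    simp only [LinearMap.coe_comp, Function.comp_apply, LinearEquiv.coe_coe,
      LinearMap.restrict_coe_apply, hφ, LinearEquiv.submoduleMap_symm_apply,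
      LinearEquiv.submoduleMap_apply]
    show h (x : F) = ((φ.symm ((g.restrict hE₁inv) (φ x)) : F₀) : F)
    erw [LinearEquiv.submoduleMap_symm_apply]
    rw [LinearMap.restrict_coe_apply]
    erw [LinearEquiv.submoduleMap_apply]
    rw [show g (eL (x : F)) = eL (h (x : F)) from rfl, eL.symm_apply_apply]
  have detF : LinearMap.det (h.restrict h₀) = LinearMap.det (g.restrict hE₁inv) := by
    rw [key]
    have := LinearMap.det_conj (g.restrict hE₁inv) φ.symm
    simpa using this
  rw [detF, detE]
end

section
/- Let L : E → F be Fredholm of index 0 between Banach spaces, and let A be a corrector of the stabilized operator L_{m,m} : E ⊕ ℝ^m → F ⊕ ℝ^m (where L_{m,m}(x,y) = (Lx, 0)). If C is an automorphism of ℝ^m, then A and A ∘ (id_E ⊕ C) are equivalent correctors of L_{m,m} if and only if det(C) > 0. -/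
/-!
Write `T = (D + B) ∘ P⁻¹` with `P = D + A`. Since `D` ignores the `ℝᵐ` component,
`D + B = P ∘ (id × C)`, so `T = P (id × C) P⁻¹` differs from the identity only on the
`m`-dimensional space `P({0} × ℝᵐ)`, where it is conjugate to `C`. The determinant of `T` on an
invariant finite-dimensional subspace containing the range of `T - 1` does not depend on the
subspace (the induced map on the quotient is the identity), so it equals `det C`.
-/

namespace LinearMap

open Submodule

variable {K V : Type*} [Field K] [AddCommGroup V] [Module K V]

lemma mem_of_sub_self_mem {f : V →ₗ[K] V} {W : Submodule K V} (h : ∀ x, f x - x ∈ W)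
    {x : V} (hx : x ∈ W) : f x ∈ W := by
  simpa using add_mem (h x) hx

lemma det_restrict_eq_det_of_comp_eq {M : Type*} [AddCommGroup M] [Module K M]
    {f : V →ₗ[K] V} {g : M →ₗ[K] M} {j : M →ₗ[K] V} (hj : Function.Injective j)
    (hfg : f ∘ₗ j = j ∘ₗ g) {U : Submodule K V} (hU : range j = U)
    (hf : ∀ x ∈ U, f x ∈ U) : (f.restrict hf).det = g.det := by
  subst hU
  let φ := LinearEquiv.ofInjective j hj
  have hconj : f.restrict hf = φ ∘ₗ g ∘ₗ φ.symm := by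
    ext y
    obtain ⟨x, rfl⟩ := φ.surjective y
    simpa [φ] using congr($hfg x)
  rw [hconj, det_conj]

lemma det_eq_det_restrict_of_sub_self_mem [FiniteDimensional K V] (f : V →ₗ[K] V)
    {W : Submodule K V} (h : ∀ x, f x - x ∈ W) (hW : ∀ x ∈ W, f x ∈ W) :
    f.det = (f.restrict hW).det := by
  have hquot : W.mapQ W f hW = LinearMap.id := by
    ext x
    simpa [Submodule.Quotient.eq] using h x
  rw [det_eq_det_mul_det W f hW, hquot, det_id, mul_one]

lemma det_restrict_eq_det_restrict_of_le {f : V →ₗ[K] V} {U W : Submodule K V}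
    [FiniteDimensional K W] (hUW : U ≤ W) (h : ∀ x, f x - x ∈ U)
    (hU : ∀ x ∈ U, f x ∈ U) (hW : ∀ x ∈ W, f x ∈ W) :
    (f.restrict hW).det = (f.restrict hU).det := by
  let U' := U.comap W.subtype
  have h' : ∀ x, f.restrict hW x - x ∈ U' := fun x => h x
  rw [det_eq_det_restrict_of_sub_self_mem _ h' (fun _ hx => mem_of_sub_self_mem h' hx)]
  refine (det_restrict_eq_det_of_comp_eq (j := W.subtype ∘ₗ U'.subtype) ?_ rfl ?_ hU).symm
  · exact Subtype.val_injective.comp Subtype.val_injective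
  · rw [range_comp, range_subtype, map_comap_subtype, inf_eq_right.mpr hUW]

lemma det_restrict_eq_det_restrict_of_sub_self_mem {f : V →ₗ[K] V} {W₁ W₂ : Submodule K V}
    [FiniteDimensional K W₁] [FiniteDimensional K W₂]
    (h₁ : ∀ x, f x - x ∈ W₁) (h₂ : ∀ x, f x - x ∈ W₂)
    (hW₁ : ∀ x ∈ W₁, f x ∈ W₁) (hW₂ : ∀ x ∈ W₂, f x ∈ W₂) :
    (f.restrict hW₁).det = (f.restrict hW₂).det := by
  have h : ∀ x, f x - x ∈ W₁ ⊓ W₂ := fun x => ⟨h₁ x, h₂ x⟩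
  have hW := fun x (hx : x ∈ W₁ ⊓ W₂) => mem_of_sub_self_mem h hx
  rw [det_restrict_eq_det_restrict_of_le inf_le_left h hW,
    det_restrict_eq_det_restrict_of_le inf_le_right h hW]

lemma det_restrict_eq_det_of_conj_prodMap_id {E M V' : Type*} [AddCommGroup E] [Module K E]
    [AddCommGroup M] [Module K M] [FiniteDimensional K M] [AddCommGroup V'] [Module K V']
    (e : (E × M) ≃ₗ[K] V') (f : V' →ₗ[K] V') (g : M →ₗ[K] M)
    (hf : ∀ x, f (e x) = e (x.1, g x.2)) {W : Submodule K V'} [FiniteDimensional K W]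
    (h : ∀ y, f y - y ∈ W) (hW : ∀ y ∈ W, f y ∈ W) :
    (f.restrict hW).det = g.det := by
  let j := e.toLinearMap ∘ₗ inr K E M
  have hj : Function.Injective j := e.injective.comp inr_injective
  have hfj : f ∘ₗ j = j ∘ₗ g := by
    ext y
    simpa [j] using hf (0, y)
  have hj_sub : ∀ y, f y - y ∈ range j := by
    intro y
    obtain ⟨x, rfl⟩ := e.surjective y
    have hdiff : ((x.1, g x.2) - x : E × M) = (0, g x.2 - x.2) := by ext <;> simp
    exact ⟨g x.2 - x.2, by simp [j, hf, ← map_sub, hdiff]⟩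
  have hjf := fun y (hy : y ∈ range j) => mem_of_sub_self_mem hj_sub hy
  rw [det_restrict_eq_det_restrict_of_sub_self_mem h hj_sub hW hjf,
    det_restrict_eq_det_of_comp_eq hj hfj rfl]

end LinearMap

theorem stmt12_general {E F : Type*}
    [NormedAddCommGroup E] [NormedSpace ℝ E]
    [NormedAddCommGroup F] [NormedSpace ℝ F]
    {m : ℕ} (L : E →L[ℝ] F)
    (D : (E × (Fin m → ℝ)) →L[ℝ] (F × (Fin m → ℝ)))
    (hD : ∀ v : E × (Fin m → ℝ), D v = (L v.1, 0))
    (A : (E × (Fin m → ℝ)) →L[ℝ] (F × (Fin m → ℝ)))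
    (eP : (E × (Fin m → ℝ)) ≃L[ℝ] (F × (Fin m → ℝ)))
    (heP : (eP : (E × (Fin m → ℝ)) →L[ℝ] (F × (Fin m → ℝ))) = D + A)
    (C : (Fin m → ℝ) ≃L[ℝ] (Fin m → ℝ))
    (B : (E × (Fin m → ℝ)) →L[ℝ] (F × (Fin m → ℝ)))
    (hBdef : B = A.comp
      (ContinuousLinearMap.prodMap (ContinuousLinearMap.id ℝ E)
        (C : (Fin m → ℝ) →L[ℝ] (Fin m → ℝ)))) :
    ∀ (F₀ : Submodule ℝ (F × (Fin m → ℝ))), FiniteDimensional ℝ F₀ →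
      LinearMap.range ((A - B) : (E × (Fin m → ℝ)) →ₗ[ℝ] (F × (Fin m → ℝ))) ≤ F₀ →
      ∀ h₀ : ∀ x ∈ F₀,
        (((D + B).comp (eP.symm : (F × (Fin m → ℝ)) →L[ℝ] (E × (Fin m → ℝ)))) :
          (F × (Fin m → ℝ)) →ₗ[ℝ] (F × (Fin m → ℝ))) x ∈ F₀,
      (0 < LinearMap.det
          (LinearMap.restrict
            (((D + B).comp (eP.symm : (F × (Fin m → ℝ)) →L[ℝ] (E × (Fin m → ℝ)))) :
              (F × (Fin m → ℝ)) →ₗ[ℝ] (F × (Fin m → ℝ))) h₀) ↔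
        0 < LinearMap.det (C : (Fin m → ℝ) →ₗ[ℝ] (Fin m → ℝ))) := by
  intro F₀ _ hAB h₀
  set T := (((D + B).comp (eP.symm : (F × (Fin m → ℝ)) →L[ℝ] (E × (Fin m → ℝ)))) :
    (F × (Fin m → ℝ)) →ₗ[ℝ] (F × (Fin m → ℝ)))
  have hT_eP : ∀ x, T (eP x) = D x + B x := fun x => by simp [T]
  have hD_eP : ∀ x, D x = eP x - A x := fun x => by
    rw [eq_sub_iff_add_eq, ← _root_.add_apply, ← heP]; rfl
  have hT_conj : ∀ x, T (eP.toLinearEquiv x) = eP.toLinearEquiv (x.1, C x.2) := fun x => by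
    have hDC : D (x.1, C x.2) = D x := by rw [hD, hD]
    simp [hT_eP, hBdef, ← hDC, hD_eP, Prod.map_apply']
  have hT_sub : ∀ y, T y - y ∈ F₀ := fun y => by
    obtain ⟨x, rfl⟩ := eP.surjective y
    refine hAB ⟨-x, ?_⟩
    rw [hT_eP, hD_eP]
    simp only [LinearMap.sub_apply, ContinuousLinearMap.coe_coe, map_neg]
    abel
  rw [LinearMap.det_restrict_eq_det_of_conj_prodMap_id eP.toLinearEquiv T _ hT_conj hT_sub h₀]

/-- For `L` Fredholm of index 0, a corrector `A` of the stabilized operator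
`L_{m,m} : E ⊕ ℝᵐ → F ⊕ ℝᵐ`, `(x,y) ↦ (Lx, 0)`, and an automorphism `C` of `ℝᵐ`,
the correctors `A` and `A ∘ (id_E ⊕ C)` are equivalent iff `det C > 0`. -/
theorem stmt12 {E F : Type*}
    [NormedAddCommGroup E] [NormedSpace ℝ E] [CompleteSpace E]
    [NormedAddCommGroup F] [NormedSpace ℝ F] [CompleteSpace F]
    {m : ℕ} (L : E →L[ℝ] F)
    (D : (E × (Fin m → ℝ)) →L[ℝ] (F × (Fin m → ℝ)))
    (hD : ∀ v : E × (Fin m → ℝ), D v = (L v.1, 0))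
    (A : (E × (Fin m → ℝ)) →L[ℝ] (F × (Fin m → ℝ)))
    (hA : FiniteDimensional ℝ
      (LinearMap.range (A : (E × (Fin m → ℝ)) →ₗ[ℝ] (F × (Fin m → ℝ)))))
    (eP : (E × (Fin m → ℝ)) ≃L[ℝ] (F × (Fin m → ℝ)))
    (heP : (eP : (E × (Fin m → ℝ)) →L[ℝ] (F × (Fin m → ℝ))) = D + A)
    (C : (Fin m → ℝ) ≃L[ℝ] (Fin m → ℝ))
    (B : (E × (Fin m → ℝ)) →L[ℝ] (F × (Fin m → ℝ)))
    (hBdef : B = A.comp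
      (ContinuousLinearMap.prodMap (ContinuousLinearMap.id ℝ E)
        (C : (Fin m → ℝ) →L[ℝ] (Fin m → ℝ))))
    (eQ : (E × (Fin m → ℝ)) ≃L[ℝ] (F × (Fin m → ℝ)))
    (heQ : (eQ : (E × (Fin m → ℝ)) →L[ℝ] (F × (Fin m → ℝ))) = D + B) :
    ∀ (F₀ : Submodule ℝ (F × (Fin m → ℝ))), FiniteDimensional ℝ F₀ →
      LinearMap.range ((A - B) : (E × (Fin m → ℝ)) →ₗ[ℝ] (F × (Fin m → ℝ))) ≤ F₀ →
      ∀ h₀ : ∀ x ∈ F₀,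
        (((D + B).comp (eP.symm : (F × (Fin m → ℝ)) →L[ℝ] (E × (Fin m → ℝ)))) :
          (F × (Fin m → ℝ)) →ₗ[ℝ] (F × (Fin m → ℝ))) x ∈ F₀,
      (0 < LinearMap.det
          (LinearMap.restrict
            (((D + B).comp (eP.symm : (F × (Fin m → ℝ)) →L[ℝ] (E × (Fin m → ℝ)))) :
              (F × (Fin m → ℝ)) →ₗ[ℝ] (F × (Fin m → ℝ))) h₀) ↔
        0 < LinearMap.det (C : (Fin m → ℝ) →ₗ[ℝ] (Fin m → ℝ))) :=
  stmt12_general L D hD A eP heP C B hBdef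
end

section
/- Let V be a real vector space with a non-degenerate symmetric bilinear form B of signature (m, n) with m > 0. Let 𝒱⁺ be the set of linearly independent m-tuples (v₁,…,v_m) in V such that B is positive definite on span(v₁,…,v_m). Then 𝒱⁺ has exactly two path components, and two m-tuples (v₁,…,v_m), (w₁,…,w_m) in 𝒱⁺ lie in the same path component if and only if det((B(v_j, w_k))_{j,k}) > 0. -/
/-!
If `q` is `B`-orthogonal to `span v` for some `v ∈ 𝒱⁺`, then `B q q ≤ 0`: otherwise `span v ⊕ ℝ q`
would be a positive subspace of dimension `m + 1`. Hence `det (B (v j) (w k)) ≠ 0` for all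
`v, w ∈ 𝒱⁺`, so its sign is constant along paths in `𝒱⁺`, and it is positive for `v = w`.
Conversely, the straight line from `w` to its `B`-orthogonal projection `v · A` onto `span v`
stays in `𝒱⁺`, and `det A` has the sign of `det (B (v j) (w k))`. Finally `v · A` is joined to `v`
when `det A > 0`, because `GL⁺(m, ℝ)` is path connected: write `A` as transvections times a
diagonal matrix, and remove the negative diagonal entries in pairs using `-1 = (quarter turn)²`
in a coordinate plane. Negating one vector of a tuple flips the sign of every such determinant,
which gives the second component.
-/

theorem JoinedIn.pos_of_pos {X : Type*} [TopologicalSpace X] {F : Set X} {x y : X} {f : X → ℝ}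
    (h : JoinedIn F x y) (hf : ContinuousOn f F) (hne : ∀ z ∈ F, f z ≠ 0) (hy : 0 < f y) :
    0 < f x := by
  obtain ⟨γ, hγ⟩ := h
  by_contra! hx
  obtain ⟨t, ht⟩ := intermediate_value_univ 0 1
    (hf.comp_continuous γ.continuous hγ) (show (0 : ℝ) ∈ Set.Icc _ _ by simpa using ⟨hx, hy.le⟩)
  exact hne _ (hγ t) ht

namespace Matrix

variable {n : Type*} [Fintype n] [DecidableEq n]

def posDetPathComponentOne : Submonoid (Matrix n n ℝ) where
  carrier := {A | JoinedIn {M | 0 < M.det} A 1}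
  one_mem' := JoinedIn.refl (by simp)
  mul_mem' {A B} hA hB := by
    refine JoinedIn.trans ?_ hB
    have hB₀ : 0 < B.det := hB.source_mem
    simpa using (hA.map (continuous_mul_const B)).mono <| by
      rintro _ ⟨M, hM, rfl⟩
      simpa using mul_pos hM hB₀

theorem transvection_mem_posDetPathComponentOne {i j : n} (hij : i ≠ j) (c : ℝ) :
    transvection i j c ∈ posDetPathComponentOne := by
  refine JoinedIn.symm (JoinedIn.ofLine (f := fun t => transvection i j (t * c)) ?_ ?_ ?_ ?_)
  · have : Continuous fun t : ℝ => (1 : Matrix n n ℝ) + t • single i j c := by fun_prop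
    simpa [transvection, smul_single, mul_comm] using this.continuousOn
  · simp
  · simp
  · rintro _ ⟨t, -, rfl⟩
    simp [det_transvection_of_ne _ _ hij]

theorem list_prod_transvection_mem_posDetPathComponentOne (L : List (TransvectionStruct n ℝ)) :
    (L.map TransvectionStruct.toMatrix).prod ∈ posDetPathComponentOne :=
  Submonoid.list_prod_mem _ fun _ hM => by
    obtain ⟨t, -, rfl⟩ := List.mem_map.1 hM
    exact transvection_mem_posDetPathComponentOne t.hij t.c

theorem diagonal_mem_posDetPathComponentOne_of_pos {d : n → ℝ} (hd : ∀ k, 0 < d k) :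
    diagonal d ∈ posDetPathComponentOne := by
  refine JoinedIn.ofLine (f := fun t => diagonal fun k => (1 - t) * d k + t) ?_ ?_ ?_ ?_
  · exact (Continuous.matrix_diagonal (by fun_prop)).continuousOn
  · simp
  · simp
  · rintro _ ⟨t, ⟨ht₀, ht₁⟩, rfl⟩
    show (0 : ℝ) < det (diagonal _)
    rw [det_diagonal]
    refine Finset.prod_pos fun k _ => ?_
    rcases ht₀.eq_or_lt with rfl | ht₀
    · simpa using hd k
    · nlinarith [hd k]

/-- The product of the three transvections is the rotation by `π / 2` in the `(i, j)`-plane. -/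
theorem transvection_quarterTurn_sq {i j : n} (hij : i ≠ j) :
    (transvection i j (1 : ℝ) * transvection j i (-1) * transvection i j 1) ^ 2 =
      diagonal fun k => if k = i ∨ k = j then -1 else 1 := by
  ext a b
  simp only [sq, Matrix.mul_assoc]
  rcases eq_or_ne a i with rfl | hai
  · simp [hij, hij.symm, diagonal_apply]
    simp [transvection, one_apply, single_apply]
    grind
  rcases eq_or_ne a j with rfl | haj
  · simp [hij, hij.symm, diagonal_apply]
    simp [transvection, one_apply, single_apply]
    grind
  · simp [hai, haj, diagonal_apply]
    simp [transvection, one_apply, hai.symm]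

theorem transvection_quarterTurn_sq_mem_posDetPathComponentOne {i j : n} (hij : i ≠ j) :
    (transvection i j (1 : ℝ) * transvection j i (-1) * transvection i j 1) ^ 2 ∈
      posDetPathComponentOne := by
  have := transvection_mem_posDetPathComponentOne hij
  have := transvection_mem_posDetPathComponentOne hij.symm
  apply_rules [Submonoid.pow_mem, Submonoid.mul_mem]

theorem diagonal_mem_posDetPathComponentOne {d : n → ℝ} (hd : 0 < ∏ k, d k) :
    diagonal d ∈ posDetPathComponentOne := by
  induction hN : (Finset.univ.filter fun k => d k < 0).card using Nat.strong_induction_on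
    generalizing d with
  | _ N ih =>
  by_cases hneg : ∃ i, d i < 0
  swap
  · push Not at hneg
    exact diagonal_mem_posDetPathComponentOne_of_pos fun k =>
      (hneg k).lt_of_ne (Finset.prod_ne_zero_iff.1 hd.ne' k (Finset.mem_univ k)).symm
  obtain ⟨i, hi⟩ := hneg
  -- the negative entries come in pairs, and a pair is made positive by a squared quarter turn
  obtain ⟨j, hji, hj⟩ : ∃ j, j ≠ i ∧ d j < 0 := by
    by_contra! h
    have : 0 ≤ ∏ k ∈ Finset.univ.erase i, d k :=
      Finset.prod_nonneg fun k hk => h k (Finset.ne_of_mem_erase hk)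
    rw [← Finset.mul_prod_erase _ _ (Finset.mem_univ i)] at hd
    nlinarith
  set d' : n → ℝ := fun k => if k = i ∨ k = j then -d k else d k
  have hdd' : diagonal d = (transvection i j (1 : ℝ) * transvection j i (-1) *
      transvection i j 1) ^ 2 * diagonal d' := by
    rw [transvection_quarterTurn_sq hji.symm, diagonal_mul_diagonal]
    congr 1; ext k; simp only [d']; split_ifs <;> ring
  have hd' : 0 < ∏ k, d' k := by
    have h := congrArg det hdd'
    simp only [det_mul, det_pow, det_transvection_of_ne _ _ hji,
      det_transvection_of_ne _ _ hji.symm, det_diagonal, mul_one, one_pow, one_mul] at h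
    exact h ▸ hd
  have hcard : (Finset.univ.filter fun k => d' k < 0).card < N := by
    refine hN ▸ Finset.card_lt_card ((Finset.ssubset_iff_of_subset ?_).2 ⟨i, ?_⟩)
    · intro k
      simp only [Finset.mem_filter, Finset.mem_univ, true_and, d']
      split_ifs with hk
      · rcases hk with rfl | rfl <;> intro <;> linarith
      · exact id
    · simp [d', hi, hi.le]
  rw [hdd']
  exact Submonoid.mul_mem _ (transvection_quarterTurn_sq_mem_posDetPathComponentOne hji.symm)
    (ih _ hcard hd' rfl)

theorem joinedIn_one_of_det_pos {A : Matrix n n ℝ} (hA : 0 < A.det) :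
    JoinedIn {M | 0 < M.det} A 1 := by
  obtain ⟨L, L', d, rfl⟩ := Pivot.exists_list_transvec_mul_diagonal_mul_list_transvec A
  have hd : 0 < ∏ k, d k := by simpa using hA
  exact Submonoid.mul_mem _ (Submonoid.mul_mem _
    (list_prod_transvection_mem_posDetPathComponentOne L) (diagonal_mem_posDetPathComponentOne hd))
    (list_prod_transvection_mem_posDetPathComponentOne L')

end Matrix

open Module Submodule
open scoped Matrix

section PositiveTuples

variable {V : Type*} [AddCommGroup V] [Module ℝ V] (B : V →ₗ[ℝ] V →ₗ[ℝ] ℝ)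
  {ι κ ν : Type*}

def PosDefOn (P : Submodule ℝ V) : Prop := ∀ x ∈ P, x ≠ 0 → 0 < B x x

def positiveTuples (ι : Type*) : Set (ι → V) :=
  {v | LinearIndependent ℝ v ∧ PosDefOn B (span ℝ (Set.range v))}

def gram (v : ι → V) (w : κ → V) : Matrix ι κ ℝ := Matrix.of fun j k => B (v j) (w k)

def tupleMul [Fintype ι] (v : ι → V) (A : Matrix ι κ ℝ) : κ → V := fun k => ∑ j, A j k • v j

variable {B}

theorem mem_positiveTuples_iff [Fintype ι] {v : ι → V} :
    v ∈ positiveTuples B ι ↔ ∀ c : ι → ℝ, c ≠ 0 → 0 < B (∑ i, c i • v i) (∑ i, c i • v i) := by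
  constructor
  · rintro ⟨hli, hpos⟩ c hc
    refine hpos _ (sum_mem fun i _ => smul_mem _ _ (subset_span ⟨i, rfl⟩)) fun h0 => hc ?_
    exact funext (Fintype.linearIndependent_iff.1 hli c h0)
  · intro h
    refine ⟨Fintype.linearIndependent_iff.2 fun c hc => ?_, fun x hx hx0 => ?_⟩
    · by_contra hc0
      simpa [hc] using h c fun h0 => hc0 (by simp [h0])
    · obtain ⟨c, rfl⟩ := (mem_span_range_iff_exists_fun ℝ).1 hx
      exact h c fun hc => hx0 (by simp [hc])

theorem gram_mulVec [Fintype κ] (v : ι → V) (w : κ → V) (d : κ → ℝ) :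
    gram B v w *ᵥ d = fun j => B (v j) (∑ k, d k • w k) := by
  ext j
  simp [gram, Matrix.mulVec, dotProduct, map_sum, mul_comm]

theorem dotProduct_gram_mulVec [Fintype ι] [Fintype κ] (v : ι → V) (w : κ → V)
    (c : ι → ℝ) (d : κ → ℝ) :
    c ⬝ᵥ gram B v w *ᵥ d = B (∑ j, c j • v j) (∑ k, d k • w k) := by
  simp only [gram_mulVec, dotProduct, map_sum, map_smul, LinearMap.sum_apply,
    LinearMap.smul_apply, smul_eq_mul, Finset.mul_sum]
  rw [Finset.sum_comm]
  exact Finset.sum_congr rfl fun _ _ => Finset.sum_congr rfl fun _ _ => by ring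

theorem sum_smul_tupleMul [Fintype ι] [Fintype κ] (v : ι → V) (A : Matrix ι κ ℝ) (c : κ → ℝ) :
    ∑ k, c k • tupleMul v A k = ∑ j, (A *ᵥ c) j • v j := by
  simp only [tupleMul, Finset.smul_sum, smul_smul, Matrix.mulVec, dotProduct, Finset.sum_smul]
  rw [Finset.sum_comm]
  simp only [mul_comm]

theorem tupleMul_one [Fintype ι] [DecidableEq ι] (v : ι → V) :
    tupleMul v (1 : Matrix ι ι ℝ) = v := by
  ext k
  simp [tupleMul, Matrix.one_apply]

theorem gram_tupleMul [Fintype κ] (v : ι → V) (w : κ → V) (A : Matrix κ ν ℝ) :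
    gram B v (tupleMul w A) = gram B v w * A := by
  ext j l
  simp [gram, tupleMul, Matrix.mul_apply, map_sum, mul_comm]

theorem tupleMul_mem_positiveTuples [Fintype ι] [DecidableEq ι] {v : ι → V}
    (hv : v ∈ positiveTuples B ι) {A : Matrix ι ι ℝ} (hA : A.det ≠ 0) : tupleMul v A ∈ positiveTuples B ι := by
  rw [mem_positiveTuples_iff] at hv ⊢
  intro c hc
  rw [sum_smul_tupleMul]
  exact hv _ fun h => hA (Matrix.exists_mulVec_eq_zero_iff.1 ⟨c, hc, h⟩)

theorem det_gram_pos [Fintype ι] [DecidableEq ι] (hsymm : ∀ x y, B x y = B y x) {v : ι → V}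
    (hv : v ∈ positiveTuples B ι) : 0 < (gram B v v).det := by
  refine Matrix.PosDef.det_pos (Matrix.posDef_iff_dotProduct_mulVec.2 ⟨?_, fun c hc => ?_⟩)
  · ext j k
    exact hsymm (v k) (v j)
  · simpa [dotProduct_gram_mulVec] using mem_positiveTuples_iff.1 hv c hc

theorem apply_self_nonpos_of_forall_apply_eq_zero [Fintype ι] (hsymm : ∀ x y, B x y = B y x)
    (hmax : ∀ P : Submodule ℝ V, PosDefOn B P → finrank ℝ P ≤ Fintype.card ι)
    {v : ι → V} (hv : v ∈ positiveTuples B ι) {q : V} (hq : ∀ j, B (v j) q = 0) : B q q ≤ 0 := by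
  by_contra! hqq
  set U := span ℝ (Set.range v)
  have hUq : ∀ x ∈ U, B x q = 0 := fun x hx => by
    induction hx using span_induction with
    | mem _ h => obtain ⟨j, rfl⟩ := h; exact hq j
    | zero => simp
    | add _ _ _ _ h₁ h₂ => simp [h₁, h₂]
    | smul _ _ _ h => simp [h]
  have hpos : PosDefOn B (U ⊔ ℝ ∙ q) := by
    intro y hy hy0
    obtain ⟨x, hx, z, hz, rfl⟩ := mem_sup.1 hy
    obtain ⟨t, rfl⟩ := mem_span_singleton.1 hz
    have hBx : 0 ≤ B x x := by
      rcases eq_or_ne x 0 with rfl | hx0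
      · simp
      · exact (hv.2 x hx hx0).le
    have hsplit : B (x + t • q) (x + t • q) = B x x + t ^ 2 * B q q := by
      simp [hUq x hx, hsymm q x]
      ring
    rw [hsplit]
    rcases eq_or_ne t 0 with rfl | ht
    · simp only [zero_smul, add_zero] at hy0 ⊢
      simpa using hv.2 x hx hy0
    · positivity
  have hlt : U < U ⊔ ℝ ∙ q := by
    refine lt_of_le_of_ne le_sup_left fun h => ?_
    have : q ∈ U := h ▸ mem_sup_right (mem_span_singleton_self q)
    exact hqq.ne' (hUq q this)
  have : FiniteDimensional ℝ U := FiniteDimensional.span_of_finite ℝ (Set.finite_range v)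
  have := finrank_lt_finrank_of_lt hlt
  have := hmax _ hpos
  rw [finrank_span_eq_card hv.1] at *
  omega

theorem det_gram_ne_zero [Fintype ι] [DecidableEq ι] (hsymm : ∀ x y, B x y = B y x)
    (hmax : ∀ P : Submodule ℝ V, PosDefOn B P → finrank ℝ P ≤ Fintype.card ι)
    {v w : ι → V} (hv : v ∈ positiveTuples B ι) (hw : w ∈ positiveTuples B ι) :
    (gram B v w).det ≠ 0 := by
  intro hdet
  obtain ⟨c, hc, hgc⟩ := Matrix.exists_mulVec_eq_zero_iff.2 hdet
  have horth : ∀ j, B (v j) (∑ k, c k • w k) = 0 := fun j => by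
    simpa [gram_mulVec] using congrFun hgc j
  exact (apply_self_nonpos_of_forall_apply_eq_zero hsymm hmax hv horth).not_gt
    (mem_positiveTuples_iff.1 hw c hc)

theorem exists_mem_positiveTuples [Fintype ι] [FiniteDimensional ℝ V] {P : Submodule ℝ V}
    (hP : finrank ℝ P = Fintype.card ι) (hpos : PosDefOn B P) : ∃ v, v ∈ positiveTuples B ι := by
  let b := (Module.finBasisOfFinrankEq ℝ P hP).reindex (Fintype.equivFin ι).symm
  refine ⟨P.subtype ∘ b, b.linearIndependent.map' P.subtype P.ker_subtype, fun x hx => hpos x ?_⟩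
  exact span_le.2 (Set.range_subset_iff.2 fun i => (b i).2) hx

theorem exists_mem_positiveTuples_det_gram_neg [Fintype ι] [DecidableEq ι] [Nonempty ι]
    {v : ι → V} (hv : v ∈ positiveTuples B ι) :
    ∃ v' ∈ positiveTuples B ι, ∀ w : ι → V, (gram B w v').det = -(gram B w v).det := by
  let ε : ι → ℝ := Function.update 1 (Classical.arbitrary ι) (-1)
  have hε : ∏ i, ε i = -1 := by simp [ε, Finset.prod_update_of_mem]
  refine ⟨tupleMul v (Matrix.diagonal ε), tupleMul_mem_positiveTuples hv (by simp [hε]),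
    fun w => ?_⟩
  rw [gram_tupleMul, Matrix.det_mul, Matrix.det_diagonal, hε, mul_neg_one]

section Topology

variable [TopologicalSpace V] [IsTopologicalAddGroup V] [ContinuousSMul ℝ V]

theorem continuous_tupleMul [Fintype ι] (v : ι → V) :
    Continuous fun A : Matrix ι κ ℝ => tupleMul v A := by
  unfold tupleMul
  fun_prop

theorem joinedIn_tupleMul_of_gram_eq [Fintype ι] (hsymm : ∀ x y, B x y = B y x)
    (hmax : ∀ P : Submodule ℝ V, PosDefOn B P → finrank ℝ P ≤ Fintype.card ι)
    {v w : ι → V} (hv : v ∈ positiveTuples B ι) (hw : w ∈ positiveTuples B ι)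
    {A : Matrix ι ι ℝ} (hA : gram B v (tupleMul v A) = gram B v w) :
    JoinedIn (positiveTuples B ι) w (tupleMul v A) := by
  set u := tupleMul v A
  refine JoinedIn.ofLine (f := fun t : ℝ => w + t • (u - w)) (by fun_prop) (by simp) (by simp) ?_
  rintro _ ⟨t, ⟨ht₀, ht₁⟩, rfl⟩
  refine mem_positiveTuples_iff.2 fun c hc => ?_
  set p := ∑ k, c k • u k
  set q := ∑ k, c k • w k - p
  have hvq : ∀ j, B (v j) q = 0 := fun j => by
    have := congrFun (congrArg (· *ᵥ c) hA) j
    simp only [gram_mulVec] at this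
    simp [q, p, this]
  have hpq : B p q = 0 := by
    simp [p, u, sum_smul_tupleMul, map_sum, hvq]
  -- `B q q ≤ 0` since `q ⊥ span v`, so replacing `q` by `(1 - t) • q` can only increase `B`
  have hqq := apply_self_nonpos_of_forall_apply_eq_zero hsymm hmax hv hvq
  have expand : ∀ s : ℝ, B (p + s • q) (p + s • q) = B p p + s ^ 2 * B q q := fun s => by
    simp [hpq, hsymm q p]
    ring
  have hy : 0 < B (p + (1 : ℝ) • q) (p + (1 : ℝ) • q) := by
    simpa [q] using mem_positiveTuples_iff.1 hw c hc
  have hcomb : ∑ k, c k • (w + t • (u - w)) k = p + (1 - t) • q := by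
    simp only [Pi.add_apply, Pi.smul_apply, Pi.sub_apply, smul_add, smul_sub,
      Finset.sum_add_distrib, Finset.sum_sub_distrib, smul_comm (c _) t, ← Finset.smul_sum, q, p]
    module
  rw [hcomb, expand]
  rw [expand] at hy
  nlinarith [mul_nonneg (mul_nonneg ht₀ (by linarith : (0 : ℝ) ≤ 2 - t)) (neg_nonneg.2 hqq)]

theorem joinedIn_tupleMul [Fintype ι] [DecidableEq ι] {v : ι → V} (hv : v ∈ positiveTuples B ι)
    {A : Matrix ι ι ℝ} (hA : 0 < A.det) : JoinedIn (positiveTuples B ι) (tupleMul v A) v := by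
  have := ((Matrix.joinedIn_one_of_det_pos hA).map (continuous_tupleMul v)).mono <| by
    rintro _ ⟨M, hM, rfl⟩
    exact tupleMul_mem_positiveTuples hv (ne_of_gt hM)
  rwa [tupleMul_one] at this

theorem det_gram_pos_of_joinedIn [Fintype ι] [DecidableEq ι] [T2Space V] [FiniteDimensional ℝ V]
    (hsymm : ∀ x y, B x y = B y x)
    (hmax : ∀ P : Submodule ℝ V, PosDefOn B P → finrank ℝ P ≤ Fintype.card ι)
    {v w : ι → V} (h : JoinedIn (positiveTuples B ι) v w) : 0 < (gram B v w).det := by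
  have hcont : Continuous fun u : ι → V => (gram B u w).det :=
    Continuous.matrix_det <| continuous_matrix fun j k =>
      (B.flip (w k)).continuous_of_finiteDimensional.comp (continuous_apply j)
  exact h.pos_of_pos hcont.continuousOn (fun u hu => det_gram_ne_zero hsymm hmax hu h.target_mem)
    (det_gram_pos hsymm h.target_mem)

theorem joinedIn_positiveTuples_iff [Fintype ι] [DecidableEq ι] [T2Space V]
    [FiniteDimensional ℝ V] (hsymm : ∀ x y, B x y = B y x)
    (hmax : ∀ P : Submodule ℝ V, PosDefOn B P → finrank ℝ P ≤ Fintype.card ι)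
    {v w : ι → V} (hv : v ∈ positiveTuples B ι) (hw : w ∈ positiveTuples B ι) :
    JoinedIn (positiveTuples B ι) v w ↔ 0 < (gram B v w).det := by
  refine ⟨det_gram_pos_of_joinedIn hsymm hmax, fun hvw => ?_⟩
  have hGv := det_gram_pos hsymm hv
  set A := (gram B v v)⁻¹ * gram B v w
  have hGA : gram B v v * A = gram B v w := Matrix.mul_nonsing_inv_cancel_left _ _ hGv.ne'.isUnit
  have hA : 0 < A.det := pos_of_mul_pos_right (by rwa [← Matrix.det_mul, hGA]) hGv.le
  exact ((joinedIn_tupleMul_of_gram_eq hsymm hmax hv hw (by rw [gram_tupleMul, hGA])).trans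
    (joinedIn_tupleMul hv hA)).symm

end Topology

end PositiveTuples

theorem stmt18_general {V : Type*} [NormedAddCommGroup V] [NormedSpace ℝ V]
    [FiniteDimensional ℝ V]
    (B : V →ₗ[ℝ] V →ₗ[ℝ] ℝ)
    (hsymm : ∀ v w : V, B v w = B w v)
    (m : ℕ) (hm : 0 < m)
    (hpos : ∃ P : Submodule ℝ V, Module.finrank ℝ P = m ∧
      ∀ x ∈ P, x ≠ 0 → 0 < B x x)
    (hmax : ∀ P : Submodule ℝ V, (∀ x ∈ P, x ≠ 0 → 0 < B x x) →
      Module.finrank ℝ P ≤ m)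
    (S : Set (Fin m → V))
    (hS : S = {v : Fin m → V | LinearIndependent ℝ v ∧
      ∀ x ∈ Submodule.span ℝ (Set.range v), x ≠ 0 → 0 < B x x}) :
    (∀ v ∈ S, ∀ w ∈ S,
      (JoinedIn S v w ↔ 0 < Matrix.det (Matrix.of fun j k : Fin m => B (v j) (w k)))) ∧
    ∃ v₁ ∈ S, ∃ v₂ ∈ S, ¬ JoinedIn S v₁ v₂ ∧
      ∀ w ∈ S, JoinedIn S w v₁ ∨ JoinedIn S w v₂ := by
  have hmax' : ∀ P, PosDefOn B P → finrank ℝ P ≤ Fintype.card (Fin m) :=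
    fun P hP => by simpa using hmax P hP
  obtain rfl : S = positiveTuples B (Fin m) := hS
  have hjoined : ∀ v ∈ positiveTuples B (Fin m), ∀ w ∈ positiveTuples B (Fin m),
      JoinedIn (positiveTuples B (Fin m)) v w ↔ 0 < (gram B v w).det :=
    fun v hv w hw => joinedIn_positiveTuples_iff hsymm hmax' hv hw
  refine ⟨hjoined, ?_⟩
  obtain ⟨P, hPm, hPpos⟩ := hpos
  obtain ⟨v₁, hv₁⟩ := exists_mem_positiveTuples (ι := Fin m) (by simpa using hPm) hPpos
  have : Nonempty (Fin m) := ⟨⟨0, hm⟩⟩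
  obtain ⟨v₂, hv₂, hneg⟩ := exists_mem_positiveTuples_det_gram_neg hv₁
  refine ⟨v₁, hv₁, v₂, hv₂, ?_, fun w hw => ?_⟩
  · rw [hjoined _ hv₁ _ hv₂, hneg, not_lt, neg_nonpos]
    exact (det_gram_pos hsymm hv₁).le
  · rw [hjoined _ hw _ hv₁, hjoined _ hw _ hv₂, hneg, neg_pos]
    exact (det_gram_ne_zero hsymm hmax' hw hv₁).lt_or_gt.symm

/-- For a non-degenerate symmetric bilinear form `B` of signature `(m, n)`, `m > 0`, the set
`𝒱⁺` of linearly independent `m`-tuples spanning a `B`-positive-definite subspace has exactly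
two path components, and two tuples lie in the same component iff `det (B (v j) (w k)) > 0`. -/
theorem stmt18 {V : Type*} [NormedAddCommGroup V] [NormedSpace ℝ V]
    [FiniteDimensional ℝ V]
    (B : V →ₗ[ℝ] V →ₗ[ℝ] ℝ)
    (hsymm : ∀ v w : V, B v w = B w v)
    (hnondeg : ∀ v : V, (∀ w : V, B v w = 0) → v = 0)
    (m n : ℕ) (hm : 0 < m)
    (hdim : Module.finrank ℝ V = m + n)
    (hpos : ∃ P : Submodule ℝ V, Module.finrank ℝ P = m ∧
      ∀ x ∈ P, x ≠ 0 → 0 < B x x)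
    (hmax : ∀ P : Submodule ℝ V, (∀ x ∈ P, x ≠ 0 → 0 < B x x) →
      Module.finrank ℝ P ≤ m)
    (S : Set (Fin m → V))
    (hS : S = {v : Fin m → V | LinearIndependent ℝ v ∧
      ∀ x ∈ Submodule.span ℝ (Set.range v), x ≠ 0 → 0 < B x x}) :
    (∀ v ∈ S, ∀ w ∈ S,
      (JoinedIn S v w ↔ 0 < Matrix.det (Matrix.of fun j k : Fin m => B (v j) (w k)))) ∧
    ∃ v₁ ∈ S, ∃ v₂ ∈ S, ¬ JoinedIn S v₁ v₂ ∧
      ∀ w ∈ S, JoinedIn S w v₁ ∨ JoinedIn S w v₂ :=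
  stmt18_general B hsymm m hm hpos hmax S hS
end
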